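/- arXiv:math/0308163 — 2 statements merged into one kernel-verified Lean document; each statement's English description precedes it below -/
import Mathlib

section
/- The curvature of the connection ∇⁰ = ∂ + (1/2)ad(ℋ) is the Hamiltonian field of the Ether curvature (Section 5, identity [∇⁰_j,∇⁰_k] = ad(ℛ_{jk})): Let ω be a symplectic form on ℝ^{2n} with Poisson tensor Ψ = ω^{-1}, and let ℋ : ℝ^{2n}×ℝ^{2n} → ℝ^{2n} be smooth and satisfy the zero-curvature equation ∂_{x^j}ℋ_x(z)_k − ∂_{x^k}ℋ_x(z)_j + {ℋ_x(·)_j, ℋ_x(·)_k}(z) = 0 (bracket in z). For smooth F : ℝ^{2n}×ℝ^{2n} → ℝ define (∇⁰_j F)(x,z) = ∂_{x^j}F(x,z) + (1/2){ℋ_x(·)_j, F(x,·)}(z), and set ℛ_{x,jk}(z) = (1/4){ℋ_x(·)_k, ℋ_x(·)_j}(z). Then for every smooth F and all indices j,k: (∇⁰_j∇⁰_k F − ∇⁰_k∇⁰_j F)(x,z) = {ℛ_{x,jk}, F(x,·)}(z). -/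
open scoped BigOperators
noncomputable section

/-- Points of coordinate space `ℝ^N`. -/
abbrev Pt (N : ℕ) := Fin N → ℝ

/-- Partial derivative `∂f/∂x^i` of a scalar function on `ℝ^N`. -/
noncomputable def pd {N : ℕ} (i : Fin N) (f : Pt N → ℝ) (x : Pt N) : ℝ :=
  fderiv ℝ f x (Pi.single i 1)

/-- The Poisson tensor `Ψ = ω⁻¹`. -/
noncomputable def Psi {N : ℕ} (ω : Pt N → Matrix (Fin N) (Fin N) ℝ) (z : Pt N) :
    Matrix (Fin N) (Fin N) ℝ := (ω z)⁻¹

/-- The Poisson bracket `{f,g}(z) = Σ ∂_m f Ψ^{mi} ∂_i g`. -/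
noncomputable def pb {N : ℕ} (ω : Pt N → Matrix (Fin N) (Fin N) ℝ) (f g : Pt N → ℝ)
    (z : Pt N) : ℝ := ∑ m, ∑ i, pd m f z * Psi ω z m i * pd i g z

/-- A symplectic form on `ℝ^N` in coordinates: a smooth, pointwise antisymmetric and
invertible matrix-valued map satisfying the closedness condition. -/
structure SymplForm (N : ℕ) where
  ω : Pt N → Matrix (Fin N) (Fin N) ℝ
  smooth : ∀ i j, ContDiff ℝ (⊤ : ℕ∞) fun z => ω z i j
  antisymm : ∀ z i j, ω z i j = - ω z j i
  invertible : ∀ z, IsUnit (ω z).det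
  closed : ∀ z i j k,
    pd i (fun w => ω w j k) z + pd j (fun w => ω w k i) z + pd k (fun w => ω w i j) z = 0

/-- The connection `∇⁰ = ∂ + (1/2)ad(ℋ)` acting on functions of `(x,z)`:
`(∇⁰_j F)(x,z) = ∂_{x^j}F(x,z) + (1/2){ℋ_x(·)_j, F(x,·)}(z)`. -/
noncomputable def nab0 {N : ℕ} (ω : Pt N → Matrix (Fin N) (Fin N) ℝ)
    (H : Pt N → Pt N → Fin N → ℝ) (j : Fin N)
    (F : Pt N → Pt N → ℝ) : Pt N → Pt N → ℝ :=
  fun x z => pd j (fun w => F w z) x + (1/2) * pb ω (fun w => H x w j) (F x) z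

open Matrix

variable {N : ℕ}

lemma pd_add {f g : Pt N → ℝ} (hf : DifferentiableAt ℝ f x) (hg : DifferentiableAt ℝ g x)
    (i : Fin N) : pd i (fun w => f w + g w) x = pd i f x + pd i g x := by
  simp [pd, fderiv_fun_add hf hg]

lemma pd_neg {f : Pt N → ℝ} (i : Fin N) (x : Pt N) :
    pd i (fun w => - f w) x = - pd i f x := by
  simp [pd, fderiv_neg]

lemma pd_sub {f g : Pt N → ℝ} (hf : DifferentiableAt ℝ f x) (hg : DifferentiableAt ℝ g x)
    (i : Fin N) : pd i (fun w => f w - g w) x = pd i f x - pd i g x := by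
  simp [pd, fderiv_fun_sub hf hg]

lemma pd_const (c : ℝ) (i : Fin N) (x : Pt N) : pd i (fun _ => c) x = 0 := by
  simp [pd]

lemma pd_mul {f g : Pt N → ℝ} (hf : DifferentiableAt ℝ f x) (hg : DifferentiableAt ℝ g x)
    (i : Fin N) : pd i (fun w => f w * g w) x = pd i f x * g x + f x * pd i g x := by
  simp [pd, fderiv_fun_mul hf hg]; ring

lemma pd_const_mul {f : Pt N → ℝ} (hf : DifferentiableAt ℝ f x) (c : ℝ) (i : Fin N) :
    pd i (fun w => c * f w) x = c * pd i f x := by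
  simp [pd, fderiv_const_mul hf]

lemma pd_sum {α : Type*} (s : Finset α) (f : α → Pt N → ℝ)
    (hf : ∀ a ∈ s, DifferentiableAt ℝ (f a) x) (i : Fin N) :
    pd i (fun w => ∑ a ∈ s, f a w) x = ∑ a ∈ s, pd i (f a) x := by
  simp [pd, fderiv_fun_sum hf]

lemma pd_smooth {f : Pt N → ℝ} (hf : ContDiff ℝ (⊤ : ℕ∞) f) (i : Fin N) :
    ContDiff ℝ (⊤ : ℕ∞) (fun x => pd i f x) := by
  exact (hf.fderiv_right (by simp)).clm_apply contDiff_const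

lemma sym2 {E : Type*} [NormedAddCommGroup E] [NormedSpace ℝ E] {Φ : E → ℝ}
    (hΦ : ContDiff ℝ (⊤ : ℕ∞) Φ) (q : E) (u v : E) :
    fderiv ℝ (fun p => fderiv ℝ Φ p u) q v = fderiv ℝ (fun p => fderiv ℝ Φ p v) q u := by
  have hd : ∀ y, HasFDerivAt Φ (fderiv ℝ Φ y) y := fun y =>
    (hΦ.differentiable (by simp) y).hasFDerivAt
  have hΦ' : Differentiable ℝ (fderiv ℝ Φ) :=
    (hΦ.fderiv_right (m := 1) ((by exact WithTop.coe_le_coe.mpr le_top))).differentiable (by simp)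
  have hq : HasFDerivAt (fderiv ℝ Φ) (fderiv ℝ (fderiv ℝ Φ) q) q := (hΦ' q).hasFDerivAt
  have hsym := second_derivative_symmetric hd hq
  have h1 : ∀ w : E, fderiv ℝ (fun p => fderiv ℝ Φ p w) q
      = (fderiv ℝ (fderiv ℝ Φ) q).flip w := by
    intro w
    have := fderiv_clm_apply (c := fderiv ℝ Φ) (u := fun _ => w) (hΦ' q) (differentiableAt_const w)
    simp at this
    rw [this]
  rw [h1 u, h1 v]
  exact (hsym v u).symm ▸ (by simpa using hsym v u)

lemma pd_comm {f : Pt N → ℝ} (hf : ContDiff ℝ (⊤ : ℕ∞) f) (i j : Fin N) (x : Pt N) :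
    pd i (fun w => pd j f w) x = pd j (fun w => pd i f w) x := by
  simp only [pd]
  exact sym2 hf x _ _


variable {ω : Pt N → Matrix (Fin N) (Fin N) ℝ}

section Joint
variable {Φ : Pt N × Pt N → ℝ}

lemma hasFDerivAt_mk_left (z : Pt N) (x : Pt N) :
    HasFDerivAt (fun w : Pt N => (w, z)) ((ContinuousLinearMap.id ℝ (Pt N)).prod 0) x :=
  HasFDerivAt.prodMk (hasFDerivAt_id x) (hasFDerivAt_const z x)

lemma hasFDerivAt_mk_right (x : Pt N) (z : Pt N) :
    HasFDerivAt (fun v : Pt N => (x, v)) ((0 : Pt N →L[ℝ] Pt N).prod (ContinuousLinearMap.id ℝ (Pt N))) z :=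
  HasFDerivAt.prodMk (hasFDerivAt_const x z) (hasFDerivAt_id z)

lemma pd_fst (hΦ : DifferentiableAt ℝ Φ (x, z)) (j : Fin N) :
    pd j (fun w => Φ (w, z)) x = fderiv ℝ Φ (x, z) (Pi.single j 1, 0) := by
  have h := hΦ.hasFDerivAt.comp x (hasFDerivAt_mk_left z x)
  have : fderiv ℝ (fun w => Φ (w, z)) x
      = (fderiv ℝ Φ (x, z)).comp ((ContinuousLinearMap.id ℝ (Pt N)).prod 0) := h.fderiv
  simp [pd, this]

lemma pd_snd (hΦ : DifferentiableAt ℝ Φ (x, z)) (m : Fin N) :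
    pd m (fun v => Φ (x, v)) z = fderiv ℝ Φ (x, z) (0, Pi.single m 1) := by
  have h := hΦ.hasFDerivAt.comp z (hasFDerivAt_mk_right x z)
  have : fderiv ℝ (fun v => Φ (x, v)) z
      = (fderiv ℝ Φ (x, z)).comp ((0 : Pt N →L[ℝ] Pt N).prod (ContinuousLinearMap.id ℝ (Pt N))) := h.fderiv
  simp [pd, this]

lemma contDiff_fst_slice (hΦ : ContDiff ℝ (⊤ : ℕ∞) Φ) (z : Pt N) :
    ContDiff ℝ (⊤ : ℕ∞) (fun w => Φ (w, z)) :=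
  hΦ.comp (contDiff_id.prodMk contDiff_const)

lemma contDiff_snd_slice (hΦ : ContDiff ℝ (⊤ : ℕ∞) Φ) (x : Pt N) :
    ContDiff ℝ (⊤ : ℕ∞) (fun v => Φ (x, v)) :=
  hΦ.comp (contDiff_const.prodMk contDiff_id)

lemma contDiff_fderiv_apply (hΦ : ContDiff ℝ (⊤ : ℕ∞) Φ) (u : Pt N × Pt N) :
    ContDiff ℝ (⊤ : ℕ∞) (fun p => fderiv ℝ Φ p u) :=
  (hΦ.fderiv_right (by simp)).clm_apply contDiff_const

/-- smoothness in `w` of `w ↦ ∂_m(Φ(w,·))(z)`. -/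
lemma contDiff_pd_snd (hΦ : ContDiff ℝ (⊤ : ℕ∞) Φ) (m : Fin N) (z : Pt N) :
    ContDiff ℝ (⊤ : ℕ∞) (fun w => pd m (fun v => Φ (w, v)) z) := by
  have : (fun w => pd m (fun v => Φ (w, v)) z)
      = fun w => fderiv ℝ Φ (w, z) (0, Pi.single m 1) := by
    funext w
    exact pd_snd ((hΦ.differentiable (by simp)) (w, z)) m
  rw [this]
  exact (contDiff_fderiv_apply hΦ _).comp (contDiff_id.prodMk contDiff_const)

lemma contDiff_pd_fst (hΦ : ContDiff ℝ (⊤ : ℕ∞) Φ) (j : Fin N) (x : Pt N) :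
    ContDiff ℝ (⊤ : ℕ∞) (fun v => pd j (fun w => Φ (w, v)) x) := by
  have : (fun v => pd j (fun w => Φ (w, v)) x)
      = fun v => fderiv ℝ Φ (x, v) (Pi.single j 1, 0) := by
    funext v
    exact pd_fst ((hΦ.differentiable (by simp)) (x, v)) j
  rw [this]
  exact (contDiff_fderiv_apply hΦ _).comp (contDiff_const.prodMk contDiff_id)

lemma pdx_pdz_comm (hΦ : ContDiff ℝ (⊤ : ℕ∞) Φ) (j m : Fin N) (x z : Pt N) :
    pd j (fun w => pd m (fun v => Φ (w, v)) z) x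
      = pd m (fun v => pd j (fun w => Φ (w, v)) x) z := by
  have hdiff := hΦ.differentiable (by simp)
  have e1 : (fun w => pd m (fun v => Φ (w, v)) z)
      = fun w => (fun p => fderiv ℝ Φ p (0, Pi.single m 1)) (w, z) := by
    funext w; exact pd_snd (hdiff (w, z)) m
  have e2 : (fun v => pd j (fun w => Φ (w, v)) x)
      = fun v => (fun p => fderiv ℝ Φ p (Pi.single j 1, 0)) (x, v) := by
    funext v; exact pd_fst (hdiff (x, v)) j
  rw [e1, e2,
    pd_fst (((contDiff_fderiv_apply hΦ _).differentiable (by simp)) (x, z)) j,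
    pd_snd (((contDiff_fderiv_apply hΦ _).differentiable (by simp)) (x, z)) m]
  exact sym2 hΦ (x, z) _ _
end Joint


/-- determinant of a smooth-entried matrix function is smooth -/
lemma det_contDiff {M : Pt N → Matrix (Fin N) (Fin N) ℝ}
    (hM : ∀ i j, ContDiff ℝ (⊤ : ℕ∞) fun z => M z i j) :
    ContDiff ℝ (⊤ : ℕ∞) fun z => (M z).det := by
  have : (fun z => (M z).det)
      = fun z => ∑ σ : Equiv.Perm (Fin N), ((Equiv.Perm.sign σ : ℤ) : ℝ) * ∏ i, M z (σ i) i := by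
    funext z; rw [Matrix.det_apply]
    refine Finset.sum_congr rfl fun σ _ => ?_
    simp [Units.smul_def, zsmul_eq_mul]
  rw [this]
  apply ContDiff.sum
  intro σ _
  exact contDiff_const.mul (contDiff_prod fun i _ => hM (σ i) i)

lemma psi_contDiff (hsm : ∀ i j, ContDiff ℝ (⊤ : ℕ∞) fun z => ω z i j)
    (hinv : ∀ z, IsUnit (ω z).det) (i j : Fin N) :
    ContDiff ℝ (⊤ : ℕ∞) fun z => Psi ω z i j := by
  have hadj : ContDiff ℝ (⊤ : ℕ∞) fun z => (ω z).adjugate i j := by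
    have : (fun z => (ω z).adjugate i j) = fun z => ((ω z).updateRow j (Pi.single i 1)).det := by
      funext z; rw [Matrix.adjugate_apply]
    rw [this]
    apply det_contDiff
    intro a b
    by_cases hab : a = j
    · subst hab
      simp only [Matrix.updateRow_apply, if_pos rfl]
      exact contDiff_const
    · simp only [Matrix.updateRow_apply, if_neg hab]
      exact hsm a b
  have hdet : ContDiff ℝ (⊤ : ℕ∞) fun z => (ω z).det := det_contDiff hsm
  have hdetne : ∀ z, (ω z).det ≠ 0 := fun z => (hinv z).ne_zero
  have : (fun z => Psi ω z i j) = fun z => ((ω z).det)⁻¹ * (ω z).adjugate i j := by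
    funext z
    simp [Psi, Matrix.inv_def, Ring.inverse_eq_inv', Matrix.smul_apply, smul_eq_mul]
  rw [this]
  exact (hdet.inv hdetne).mul hadj

lemma psi_mul_omega (hinv : ∀ z, IsUnit (ω z).det) (z : Pt N) (i b : Fin N) :
    ∑ a, Psi ω z i a * ω z a b = if i = b then 1 else 0 := by
  have h := Matrix.nonsing_inv_mul (ω z) (hinv z)
  have := congrFun (congrFun h i) b
  rw [Matrix.mul_apply] at this
  simpa [Psi, Matrix.one_apply] using this

lemma omega_mul_psi (hinv : ∀ z, IsUnit (ω z).det) (z : Pt N) (a j : Fin N) :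
    ∑ b, ω z a b * Psi ω z b j = if a = j then 1 else 0 := by
  have h := Matrix.mul_nonsing_inv (ω z) (hinv z)
  have := congrFun (congrFun h a) j
  rw [Matrix.mul_apply] at this
  simpa [Psi, Matrix.one_apply] using this

lemma psi_antisymm (hanti : ∀ z i j, ω z i j = - ω z j i) (hinv : ∀ z, IsUnit (ω z).det)
    (z : Pt N) (i j : Fin N) : Psi ω z i j = - Psi ω z j i := by
  have ht : (ω z)ᵀ = - ω z := by
    ext a b
    rw [Matrix.transpose_apply, Matrix.neg_apply]
    exact (hanti z b a).symm ▸ (hanti z b a)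
  have h1 : ((ω z)ᵀ)⁻¹ = ((ω z)⁻¹)ᵀ := (Matrix.transpose_nonsing_inv (ω z)).symm
  have h2 : (- ω z)⁻¹ = - (ω z)⁻¹ := by
    rw [Matrix.inv_eq_right_inv]
    rw [neg_mul_neg, Matrix.mul_nonsing_inv (ω z) (hinv z)]
  have h3 : ((ω z)⁻¹)ᵀ = - (ω z)⁻¹ := by rw [← h1, ht, h2]
  have h4 := congrFun (congrFun h3 j) i
  rw [Matrix.transpose_apply, Matrix.neg_apply] at h4
  simpa [Psi] using h4

/-! ## Sum reindexing -/

lemma sum_flat3 (B : Fin N → Fin N → Fin N → ℝ) :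
    ∑ x : Fin N × Fin N × Fin N, B x.1 x.2.1 x.2.2 = ∑ m, ∑ p, ∑ q, B m p q := by
  rw [Fintype.sum_prod_type]
  exact Finset.sum_congr rfl fun m _ => Fintype.sum_prod_type _

lemma sum3_cyc (A : Fin N → Fin N → Fin N → ℝ) :
    ∑ m, ∑ p, ∑ q, A m p q = ∑ m, ∑ p, ∑ q, A q m p := by
  rw [← sum_flat3 A, ← sum_flat3 (fun m p q => A q m p)]
  exact Fintype.sum_equiv
    ⟨fun x => (x.2.1, x.2.2, x.1), fun x => (x.2.2, x.1, x.2.1),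
      by rintro ⟨_, _, _⟩; rfl, by rintro ⟨_, _, _⟩; rfl⟩
    _ _ (by rintro ⟨m, p, q⟩; rfl)

lemma sum_flat4 (B : Fin N → Fin N → Fin N → Fin N → ℝ) :
    ∑ x : Fin N × Fin N × Fin N × Fin N, B x.1 x.2.1 x.2.2.1 x.2.2.2
      = ∑ m, ∑ i, ∑ p, ∑ q, B m i p q := by
  rw [Fintype.sum_prod_type]
  exact Finset.sum_congr rfl fun m _ => sum_flat3 (fun a b c => B m a b c)

lemma sum4_perm (A : Fin N → Fin N → Fin N → Fin N → ℝ) :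
    ∑ m, ∑ i, ∑ p, ∑ q, A m i p q = ∑ m, ∑ i, ∑ p, ∑ q, A p q i m := by
  rw [← sum_flat4 A, ← sum_flat4 (fun m i p q => A p q i m)]
  exact Fintype.sum_equiv
    ⟨fun x => (x.2.2.2, x.2.2.1, x.1, x.2.1), fun x => (x.2.2.1, x.2.2.2, x.2.1, x.1),
      by rintro ⟨_, _, _, _⟩; rfl, by rintro ⟨_, _, _, _⟩; rfl⟩
    _ _ (by rintro ⟨m, i, p, q⟩; rfl)

lemma sum_comm3 (A : Fin N → Fin N → Fin N → ℝ) :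
    ∑ i, ∑ p, ∑ q, A i p q = ∑ p, ∑ q, ∑ i, A i p q := by
  rw [Finset.sum_comm]
  exact Finset.sum_congr rfl fun p _ => Finset.sum_comm

/-! ## Derivative of the Poisson tensor -/

lemma pd_psi' (hsm : ∀ i j, ContDiff ℝ (⊤ : ℕ∞) fun z => ω z i j)
    (hanti : ∀ z i j, ω z i j = - ω z j i)
    (hinv : ∀ z, IsUnit (ω z).det) (m i j : Fin N) (z : Pt N) :
    pd m (fun w => Psi ω w i j) z
      = ∑ a, ∑ b, Psi ω z i a * pd m (fun w => ω w a b) z * Psi ω z j b := by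
  have hPsiC : ∀ a b, ContDiff ℝ (⊤ : ℕ∞) fun w => Psi ω w a b := fun a b => psi_contDiff hsm hinv a b
  have hPsiD : ∀ a b (w : Pt N), DifferentiableAt ℝ (fun w => Psi ω w a b) w := fun a b w =>
    ((hPsiC a b).differentiable (by simp)) w
  have hωD : ∀ a b (w : Pt N), DifferentiableAt ℝ (fun w => ω w a b) w := fun a b w =>
    ((hsm a b).differentiable (by simp)) w
  -- differentiate the identity Ψ ω = 1
  have key : ∀ b, ∑ a, (pd m (fun w => Psi ω w i a) z * ω z a b
      + Psi ω z i a * pd m (fun w => ω w a b) z) = 0 := by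
    intro b
    have h0 : pd m (fun w => ∑ a, Psi ω w i a * ω w a b) z = 0 := by
      have : (fun w => ∑ a, Psi ω w i a * ω w a b)
          = fun _ => if i = b then (1:ℝ) else 0 := by
        funext w; exact psi_mul_omega hinv w i b
      rw [this, pd_const]
    rw [pd_sum Finset.univ _ (fun a _ => ((hPsiD i a z).fun_mul (hωD a b z))) m] at h0
    rw [← h0]
    exact Finset.sum_congr rfl fun a _ => (pd_mul (hPsiD i a z) (hωD a b z) m).symm
  -- contract with Ψ on the right
  have expand : pd m (fun w => Psi ω w i j) z
      = ∑ b, (∑ a, pd m (fun w => Psi ω w i a) z * ω z a b) * Psi ω z b j := by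
    have : ∑ b, (∑ a, pd m (fun w => Psi ω w i a) z * ω z a b) * Psi ω z b j
        = ∑ a, pd m (fun w => Psi ω w i a) z * (∑ b, ω z a b * Psi ω z b j) := by
      calc ∑ b, (∑ a, pd m (fun w => Psi ω w i a) z * ω z a b) * Psi ω z b j
          = ∑ b, ∑ a, pd m (fun w => Psi ω w i a) z * ω z a b * Psi ω z b j :=
            Finset.sum_congr rfl fun b _ => Finset.sum_mul _ _ _
        _ = ∑ a, ∑ b, pd m (fun w => Psi ω w i a) z * ω z a b * Psi ω z b j :=
            Finset.sum_comm
        _ = ∑ a, pd m (fun w => Psi ω w i a) z * (∑ b, ω z a b * Psi ω z b j) := by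
            refine Finset.sum_congr rfl fun a _ => ?_
            rw [Finset.mul_sum]
            exact Finset.sum_congr rfl fun b _ => by ring
    rw [this]
    have : ∀ a, pd m (fun w => Psi ω w i a) z * (∑ b, ω z a b * Psi ω z b j)
        = pd m (fun w => Psi ω w i a) z * (if a = j then 1 else 0) := by
      intro a; rw [omega_mul_psi hinv]
    rw [Finset.sum_congr rfl fun a _ => this a]
    simp
  rw [expand]
  have step : ∀ b, (∑ a, pd m (fun w => Psi ω w i a) z * ω z a b)
      = - ∑ a, Psi ω z i a * pd m (fun w => ω w a b) z := by
    intro b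
    have := key b
    rw [Finset.sum_add_distrib] at this
    linarith
  rw [Finset.sum_congr rfl fun b _ => by rw [step b]]
  rw [Finset.sum_comm]
  refine Finset.sum_congr rfl fun b _ => ?_
  rw [psi_antisymm hanti hinv z b j, neg_mul_neg, Finset.sum_mul]

/-! ## Poisson bracket basics -/

lemma pb_smooth (hsm : ∀ i j, ContDiff ℝ (⊤ : ℕ∞) fun z => ω z i j)
    (hinv : ∀ z, IsUnit (ω z).det) {f g : Pt N → ℝ}
    (hf : ContDiff ℝ (⊤ : ℕ∞) f) (hg : ContDiff ℝ (⊤ : ℕ∞) g) :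
    ContDiff ℝ (⊤ : ℕ∞) (pb ω f g) := by
  apply ContDiff.sum; intro m _
  apply ContDiff.sum; intro i _
  exact ((pd_smooth hf m).mul (psi_contDiff hsm hinv m i)).mul (pd_smooth hg i)

lemma pb_antisymm (hanti : ∀ z i j, ω z i j = - ω z j i)
    (hinv : ∀ z, IsUnit (ω z).det) (f g : Pt N → ℝ) (z : Pt N) :
    pb ω f g z = - pb ω g f z := by
  have h2 : pb ω g f z = ∑ m, ∑ i, pd i g z * Psi ω z i m * pd m f z := Finset.sum_comm
  have : pb ω f g z + pb ω g f z = 0 := by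
    rw [h2, pb, ← Finset.sum_add_distrib]
    refine Finset.sum_eq_zero fun m _ => ?_
    rw [← Finset.sum_add_distrib]
    refine Finset.sum_eq_zero fun i _ => ?_
    rw [psi_antisymm hanti hinv z i m]
    ring
  linarith

lemma pb_add₂ {f g h : Pt N → ℝ} (hg : DifferentiableAt ℝ g z) (hh : DifferentiableAt ℝ h z) :
    pb ω f (fun w => g w + h w) z = pb ω f g z + pb ω f h z := by
  unfold pb
  rw [← Finset.sum_add_distrib]
  refine Finset.sum_congr rfl fun m _ => ?_
  rw [← Finset.sum_add_distrib]
  refine Finset.sum_congr rfl fun i _ => ?_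
  rw [pd_add hg hh]
  ring

lemma pb_sub₁ {f g h : Pt N → ℝ} (hf : DifferentiableAt ℝ f z) (hg : DifferentiableAt ℝ g z) :
    pb ω (fun w => f w - g w) h z = pb ω f h z - pb ω g h z := by
  unfold pb
  rw [← Finset.sum_sub_distrib]
  refine Finset.sum_congr rfl fun m _ => ?_
  rw [← Finset.sum_sub_distrib]
  refine Finset.sum_congr rfl fun i _ => ?_
  rw [pd_sub hf hg]
  ring

lemma pb_cmul₁ {f g : Pt N → ℝ} (hf : DifferentiableAt ℝ f z) (c : ℝ) :
    pb ω (fun w => c * f w) g z = c * pb ω f g z := by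
  unfold pb
  rw [Finset.mul_sum]
  refine Finset.sum_congr rfl fun m _ => ?_
  rw [Finset.mul_sum]
  refine Finset.sum_congr rfl fun i _ => ?_
  rw [pd_const_mul hf]
  ring

lemma pb_neg₁ {f g : Pt N → ℝ} (z : Pt N) :
    pb ω (fun w => - f w) g z = - pb ω f g z := by
  unfold pb
  rw [← Finset.sum_neg_distrib]
  refine Finset.sum_congr rfl fun m _ => ?_
  rw [← Finset.sum_neg_distrib]
  refine Finset.sum_congr rfl fun i _ => ?_
  rw [pd_neg]
  ring

/-! ## Bracket-of-bracket expansion -/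

/-- the three pieces of `{f,{g,h}}` -/
noncomputable def S1 (ω : Pt N → Matrix (Fin N) (Fin N) ℝ) (f g h : Pt N → ℝ) (z : Pt N) : ℝ :=
  ∑ m, ∑ i, ∑ p, ∑ q, pd m f z * Psi ω z m i *
    (pd i (fun w => pd p g w) z * Psi ω z p q * pd q h z)

noncomputable def S2 (ω : Pt N → Matrix (Fin N) (Fin N) ℝ) (f g h : Pt N → ℝ) (z : Pt N) : ℝ :=
  ∑ m, ∑ i, ∑ p, ∑ q, pd m f z * Psi ω z m i *
    (pd p g z * pd i (fun w => Psi ω w p q) z * pd q h z)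

noncomputable def S3 (ω : Pt N → Matrix (Fin N) (Fin N) ℝ) (f g h : Pt N → ℝ) (z : Pt N) : ℝ :=
  ∑ m, ∑ i, ∑ p, ∑ q, pd m f z * Psi ω z m i *
    (pd p g z * Psi ω z p q * pd i (fun w => pd q h w) z)

lemma pd_pb (hsm : ∀ i j, ContDiff ℝ (⊤ : ℕ∞) fun z => ω z i j) (hinv : ∀ z, IsUnit (ω z).det)
    {g h : Pt N → ℝ} (hg : ContDiff ℝ (⊤ : ℕ∞) g) (hh : ContDiff ℝ (⊤ : ℕ∞) h) (i : Fin N) (z : Pt N) :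
    pd i (pb ω g h) z = ∑ p, ∑ q,
      (pd i (fun w => pd p g w) z * Psi ω z p q * pd q h z
       + pd p g z * pd i (fun w => Psi ω w p q) z * pd q h z
       + pd p g z * Psi ω z p q * pd i (fun w => pd q h w) z) := by
  have hdg : ∀ p (w : Pt N), DifferentiableAt ℝ (fun v => pd p g v) w := fun p w =>
    ((pd_smooth hg p).differentiable (by simp)) w
  have hdh : ∀ q (w : Pt N), DifferentiableAt ℝ (fun v => pd q h v) w := fun q w =>
    ((pd_smooth hh q).differentiable (by simp)) w
  have hP : ∀ p q (w : Pt N), DifferentiableAt ℝ (fun v => Psi ω v p q) w := fun p q w =>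
    ((psi_contDiff hsm hinv p q).differentiable (by simp)) w
  have e1 : pb ω g h = fun w => ∑ p, ∑ q, pd p g w * Psi ω w p q * pd q h w := rfl
  rw [e1, pd_sum Finset.univ _ (fun p _ => by
    apply DifferentiableAt.fun_sum
    intro q _
    exact (((hdg p z).fun_mul (hP p q z)).fun_mul (hdh q z)))]
  refine Finset.sum_congr rfl fun p _ => ?_
  rw [pd_sum Finset.univ _ (fun q _ => ((hdg p z).fun_mul (hP p q z)).fun_mul (hdh q z))]
  refine Finset.sum_congr rfl fun q _ => ?_
  rw [pd_mul ((hdg p z).fun_mul (hP p q z)) (hdh q z), pd_mul (hdg p z) (hP p q z)]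
  ring

lemma pb_pb_expand (hsm : ∀ i j, ContDiff ℝ (⊤ : ℕ∞) fun z => ω z i j) (hinv : ∀ z, IsUnit (ω z).det)
    {f g h : Pt N → ℝ} (hg : ContDiff ℝ (⊤ : ℕ∞) g) (hh : ContDiff ℝ (⊤ : ℕ∞) h) (z : Pt N) :
    pb ω f (pb ω g h) z = S1 ω f g h z + S2 ω f g h z + S3 ω f g h z := by
  have e1 : pb ω f (pb ω g h) z = ∑ m, ∑ i, pd m f z * Psi ω z m i * pd i (pb ω g h) z := rfl
  rw [e1]
  unfold S1 S2 S3
  rw [← Finset.sum_add_distrib, ← Finset.sum_add_distrib]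
  refine Finset.sum_congr rfl fun m _ => ?_
  rw [← Finset.sum_add_distrib, ← Finset.sum_add_distrib]
  refine Finset.sum_congr rfl fun i _ => ?_
  rw [pd_pb hsm hinv hg hh i z, Finset.mul_sum, ← Finset.sum_add_distrib, ← Finset.sum_add_distrib]
  refine Finset.sum_congr rfl fun p _ => ?_
  rw [Finset.mul_sum, ← Finset.sum_add_distrib, ← Finset.sum_add_distrib]
  refine Finset.sum_congr rfl fun q _ => ?_
  ring

lemma s1_eq_neg_s3 (hanti : ∀ z i j, ω z i j = - ω z j i) (hinv : ∀ z, IsUnit (ω z).det)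
    {f g h : Pt N → ℝ} (hh : ContDiff ℝ (⊤ : ℕ∞) h) (z : Pt N) :
    S1 ω g h f z = - S3 ω f g h z := by
  unfold S1 S3
  rw [sum4_perm (fun m i p q => pd m g z * Psi ω z m i *
    (pd i (fun w => pd p h w) z * Psi ω z p q * pd q f z))]
  have : ∀ m i p q : Fin N,
      pd p g z * Psi ω z p q * (pd q (fun w => pd i h w) z * Psi ω z i m * pd m f z)
        = -(pd m f z * Psi ω z m i * (pd p g z * Psi ω z p q * pd i (fun w => pd q h w) z)) := by
    intro m i p q
    rw [psi_antisymm hanti hinv z i m, pd_comm hh q i z]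
    ring
  calc ∑ m, ∑ i, ∑ p, ∑ q, pd p g z * Psi ω z p q *
        (pd q (fun w => pd i h w) z * Psi ω z i m * pd m f z)
      = ∑ m, ∑ i, ∑ p, ∑ q, -(pd m f z * Psi ω z m i *
        (pd p g z * Psi ω z p q * pd i (fun w => pd q h w) z)) := by
        exact Finset.sum_congr rfl fun m _ => Finset.sum_congr rfl fun i _ =>
          Finset.sum_congr rfl fun p _ => Finset.sum_congr rfl fun q _ => this m i p q
    _ = - ∑ m, ∑ i, ∑ p, ∑ q, pd m f z * Psi ω z m i *
        (pd p g z * Psi ω z p q * pd i (fun w => pd q h w) z) := by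
        simp [Finset.sum_neg_distrib]

/-- the canonical trilinear coefficient -/
noncomputable def CC (ω : Pt N → Matrix (Fin N) (Fin N) ℝ) (z : Pt N) (m p q : Fin N) : ℝ :=
  ∑ i, ∑ a, ∑ b, Psi ω z m i * Psi ω z p a * Psi ω z q b * pd i (fun w => ω w a b) z

noncomputable def W (ω : Pt N → Matrix (Fin N) (Fin N) ℝ) (f g h : Pt N → ℝ) (z : Pt N) : ℝ :=
  ∑ m, ∑ p, ∑ q, (pd m f z * pd p g z * pd q h z) * CC ω z m p q

lemma s2_canon (hsm : ∀ i j, ContDiff ℝ (⊤ : ℕ∞) fun z => ω z i j)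
    (hanti : ∀ z i j, ω z i j = - ω z j i) (hinv : ∀ z, IsUnit (ω z).det)
    (f g h : Pt N → ℝ) (z : Pt N) :
    S2 ω f g h z = W ω f g h z := by
  unfold S2 W CC
  have step1 : ∀ m i p q : Fin N,
      pd m f z * Psi ω z m i * (pd p g z * pd i (fun w => Psi ω w p q) z * pd q h z)
        = ∑ a, ∑ b, (pd m f z * pd p g z * pd q h z) *
            (Psi ω z m i * Psi ω z p a * Psi ω z q b * pd i (fun w => ω w a b) z) := by
    intro m i p q
    rw [pd_psi' hsm hanti hinv i p q z]
    simp only [Finset.mul_sum, Finset.sum_mul]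
    refine Finset.sum_congr rfl fun a _ => ?_
    refine Finset.sum_congr rfl fun b _ => ?_
    ring
  calc ∑ m, ∑ i, ∑ p, ∑ q, pd m f z * Psi ω z m i *
        (pd p g z * pd i (fun w => Psi ω w p q) z * pd q h z)
      = ∑ m, ∑ i, ∑ p, ∑ q, ∑ a, ∑ b, (pd m f z * pd p g z * pd q h z) *
          (Psi ω z m i * Psi ω z p a * Psi ω z q b * pd i (fun w => ω w a b) z) := by
        exact Finset.sum_congr rfl fun m _ => Finset.sum_congr rfl fun i _ =>
          Finset.sum_congr rfl fun p _ => Finset.sum_congr rfl fun q _ => step1 m i p q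
    _ = ∑ m, ∑ p, ∑ q, ∑ i, ∑ a, ∑ b, (pd m f z * pd p g z * pd q h z) *
          (Psi ω z m i * Psi ω z p a * Psi ω z q b * pd i (fun w => ω w a b) z) := by
        refine Finset.sum_congr rfl fun m _ => ?_
        exact sum_comm3 (fun i p q => ∑ a, ∑ b, (pd m f z * pd p g z * pd q h z) *
          (Psi ω z m i * Psi ω z p a * Psi ω z q b * pd i (fun w => ω w a b) z))
    _ = ∑ m, ∑ p, ∑ q, (pd m f z * pd p g z * pd q h z) *
          ∑ i, ∑ a, ∑ b, Psi ω z m i * Psi ω z p a * Psi ω z q b *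
            pd i (fun w => ω w a b) z := by
        refine Finset.sum_congr rfl fun m _ => Finset.sum_congr rfl fun p _ =>
          Finset.sum_congr rfl fun q _ => ?_
        rw [Finset.mul_sum]
        refine Finset.sum_congr rfl fun i _ => ?_
        rw [Finset.mul_sum]
        refine Finset.sum_congr rfl fun a _ => ?_
        rw [Finset.mul_sum]

lemma cc_cyc (hclosed : ∀ z i j k,
      pd i (fun w => ω w j k) z + pd j (fun w => ω w k i) z + pd k (fun w => ω w i j) z = 0)
    (z : Pt N) (m p q : Fin N) :
    CC ω z m p q + CC ω z p q m + CC ω z q m p = 0 := by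
  have h2 : CC ω z p q m = ∑ i, ∑ a, ∑ b,
      Psi ω z m i * Psi ω z p a * Psi ω z q b * pd a (fun w => ω w b i) z := by
    unfold CC
    rw [sum3_cyc (fun i a b => Psi ω z p i * Psi ω z q a * Psi ω z m b * pd i (fun w => ω w a b) z),
      sum3_cyc (fun i a b => Psi ω z p b * Psi ω z q i * Psi ω z m a * pd b (fun w => ω w i a) z)]
    exact Finset.sum_congr rfl fun i _ => Finset.sum_congr rfl fun a _ =>
      Finset.sum_congr rfl fun b _ => by ring
  have h3 : CC ω z q m p = ∑ i, ∑ a, ∑ b,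
      Psi ω z m i * Psi ω z p a * Psi ω z q b * pd b (fun w => ω w i a) z := by
    unfold CC
    rw [sum3_cyc (fun i a b => Psi ω z q i * Psi ω z m a * Psi ω z p b * pd i (fun w => ω w a b) z)]
    exact Finset.sum_congr rfl fun i _ => Finset.sum_congr rfl fun a _ =>
      Finset.sum_congr rfl fun b _ => by ring
  rw [h2, h3]
  unfold CC
  rw [← Finset.sum_add_distrib, ← Finset.sum_add_distrib]
  refine Finset.sum_eq_zero fun i _ => ?_
  rw [← Finset.sum_add_distrib, ← Finset.sum_add_distrib]
  refine Finset.sum_eq_zero fun a _ => ?_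
  rw [← Finset.sum_add_distrib, ← Finset.sum_add_distrib]
  refine Finset.sum_eq_zero fun b _ => ?_
  have := hclosed z i a b
  calc Psi ω z m i * Psi ω z p a * Psi ω z q b * pd i (fun w => ω w a b) z
        + Psi ω z m i * Psi ω z p a * Psi ω z q b * pd a (fun w => ω w b i) z
        + Psi ω z m i * Psi ω z p a * Psi ω z q b * pd b (fun w => ω w i a) z
      = Psi ω z m i * Psi ω z p a * Psi ω z q b *
          (pd i (fun w => ω w a b) z + pd a (fun w => ω w b i) z
            + pd b (fun w => ω w i a) z) := by ring
    _ = 0 := by rw [this, mul_zero]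

lemma w_cyc (hclosed : ∀ z i j k,
      pd i (fun w => ω w j k) z + pd j (fun w => ω w k i) z + pd k (fun w => ω w i j) z = 0)
    (f g h : Pt N → ℝ) (z : Pt N) :
    W ω f g h z + W ω g h f z + W ω h f g z = 0 := by
  have h2 : W ω g h f z = ∑ m, ∑ p, ∑ q,
      (pd m f z * pd p g z * pd q h z) * CC ω z p q m := by
    unfold W
    rw [sum3_cyc (fun m p q => (pd m g z * pd p h z * pd q f z) * CC ω z m p q),
      sum3_cyc (fun m p q => (pd q g z * pd m h z * pd p f z) * CC ω z q m p)]
    exact Finset.sum_congr rfl fun m _ => Finset.sum_congr rfl fun p _ =>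
      Finset.sum_congr rfl fun q _ => by ring_nf
  have h3 : W ω h f g z = ∑ m, ∑ p, ∑ q,
      (pd m f z * pd p g z * pd q h z) * CC ω z q m p := by
    unfold W
    rw [sum3_cyc (fun m p q => (pd m h z * pd p f z * pd q g z) * CC ω z m p q)]
    exact Finset.sum_congr rfl fun m _ => Finset.sum_congr rfl fun p _ =>
      Finset.sum_congr rfl fun q _ => by ring_nf
  rw [h2, h3]
  unfold W
  rw [← Finset.sum_add_distrib, ← Finset.sum_add_distrib]
  refine Finset.sum_eq_zero fun m _ => ?_
  rw [← Finset.sum_add_distrib, ← Finset.sum_add_distrib]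
  refine Finset.sum_eq_zero fun p _ => ?_
  rw [← Finset.sum_add_distrib, ← Finset.sum_add_distrib]
  refine Finset.sum_eq_zero fun q _ => ?_
  calc (pd m f z * pd p g z * pd q h z) * CC ω z m p q
        + (pd m f z * pd p g z * pd q h z) * CC ω z p q m
        + (pd m f z * pd p g z * pd q h z) * CC ω z q m p
      = (pd m f z * pd p g z * pd q h z) *
          (CC ω z m p q + CC ω z p q m + CC ω z q m p) := by ring
    _ = 0 := by rw [cc_cyc hclosed z m p q, mul_zero]

lemma jacobi (hsm : ∀ i j, ContDiff ℝ (⊤ : ℕ∞) fun z => ω z i j)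
    (hanti : ∀ z i j, ω z i j = - ω z j i) (hinv : ∀ z, IsUnit (ω z).det)
    (hclosed : ∀ z i j k,
      pd i (fun w => ω w j k) z + pd j (fun w => ω w k i) z + pd k (fun w => ω w i j) z = 0)
    {f g h : Pt N → ℝ} (hf : ContDiff ℝ (⊤ : ℕ∞) f) (hg : ContDiff ℝ (⊤ : ℕ∞) g) (hh : ContDiff ℝ (⊤ : ℕ∞) h)
    (z : Pt N) :
    pb ω f (pb ω g h) z + pb ω g (pb ω h f) z + pb ω h (pb ω f g) z = 0 := by
  rw [pb_pb_expand hsm hinv hg hh z, pb_pb_expand hsm hinv hh hf z,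
    pb_pb_expand hsm hinv hf hg z]
  have e1 := s1_eq_neg_s3 hanti hinv (f := f) (g := g) (h := h) hh z
  have e2 := s1_eq_neg_s3 hanti hinv (f := g) (g := h) (h := f) hf z
  have e3 := s1_eq_neg_s3 hanti hinv (f := h) (g := f) (h := g) hg z
  have c1 := s2_canon hsm hanti hinv f g h z
  have c2 := s2_canon hsm hanti hinv g h f z
  have c3 := s2_canon hsm hanti hinv h f g z
  have wz := w_cyc hclosed f g h z
  linarith

/-! ## More pb linearity -/

lemma pb_cmul₂ {f g : Pt N → ℝ} (hg : DifferentiableAt ℝ g z) (c : ℝ) :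
    pb ω f (fun w => c * g w) z = c * pb ω f g z := by
  unfold pb
  rw [Finset.mul_sum]
  refine Finset.sum_congr rfl fun m _ => ?_
  rw [Finset.mul_sum]
  refine Finset.sum_congr rfl fun i _ => ?_
  rw [pd_const_mul hg]
  ring

lemma pb_neg₂ {f g : Pt N → ℝ} (z : Pt N) :
    pb ω f (fun w => - g w) z = - pb ω f g z := by
  unfold pb
  rw [← Finset.sum_neg_distrib]
  refine Finset.sum_congr rfl fun m _ => ?_
  rw [← Finset.sum_neg_distrib]
  refine Finset.sum_congr rfl fun i _ => ?_
  rw [pd_neg]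
  ring

/-! ## x-differentiation of the bracket -/

section LeibnizX
variable {Φ Ψf : Pt N × Pt N → ℝ}

lemma contDiff_pd_fst_slice (hΦ : ContDiff ℝ (⊤ : ℕ∞) Φ) (k : Fin N) (z : Pt N) :
    ContDiff ℝ (⊤ : ℕ∞) (fun w => pd k (fun w' => Φ (w', z)) w) := by
  have : (fun w => pd k (fun w' => Φ (w', z)) w)
      = fun w => fderiv ℝ (fun w' => Φ (w', z)) w (Pi.single k 1) := rfl
  rw [this]
  exact ((contDiff_fst_slice hΦ z).fderiv_right (by simp)).clm_apply contDiff_const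

lemma contDiff_pb_x (hsm : ∀ i j, ContDiff ℝ (⊤ : ℕ∞) fun z => ω z i j)
    (hinv : ∀ z, IsUnit (ω z).det)
    (hΦ : ContDiff ℝ (⊤ : ℕ∞) Φ) (hΨf : ContDiff ℝ (⊤ : ℕ∞) Ψf) (z : Pt N) :
    ContDiff ℝ (⊤ : ℕ∞) (fun w => pb ω (fun v => Φ (w, v)) (fun v => Ψf (w, v)) z) := by
  apply ContDiff.sum; intro m _
  apply ContDiff.sum; intro i _
  exact ((contDiff_pd_snd hΦ m z).mul contDiff_const).mul (contDiff_pd_snd hΨf i z)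

lemma pd_x_pb (hsm : ∀ i j, ContDiff ℝ (⊤ : ℕ∞) fun z => ω z i j)
    (hinv : ∀ z, IsUnit (ω z).det)
    (hΦ : ContDiff ℝ (⊤ : ℕ∞) Φ) (hΨf : ContDiff ℝ (⊤ : ℕ∞) Ψf) (j : Fin N) (x z : Pt N) :
    pd j (fun w => pb ω (fun v => Φ (w, v)) (fun v => Ψf (w, v)) z) x
      = pb ω (fun v => pd j (fun w => Φ (w, v)) x) (fun v => Ψf (x, v)) z
        + pb ω (fun v => Φ (x, v)) (fun v => pd j (fun w => Ψf (w, v)) x) z := by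
  have hA : ∀ m (w : Pt N), DifferentiableAt ℝ (fun w' => pd m (fun v => Φ (w', v)) z) w :=
    fun m w => ((contDiff_pd_snd hΦ m z).differentiable (by simp)) w
  have hB : ∀ i (w : Pt N), DifferentiableAt ℝ (fun w' => pd i (fun v => Ψf (w', v)) z) w :=
    fun i w => ((contDiff_pd_snd hΨf i z).differentiable (by simp)) w
  have e : (fun w => pb ω (fun v => Φ (w, v)) (fun v => Ψf (w, v)) z)
      = fun w => ∑ m, ∑ i, pd m (fun v => Φ (w, v)) z * Psi ω z m i *
          pd i (fun v => Ψf (w, v)) z := rfl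
  rw [e, pd_sum Finset.univ _ (fun m _ => by
    apply DifferentiableAt.fun_sum
    intro i _
    exact ((hA m x).fun_mul (differentiableAt_const _)).fun_mul (hB i x))]
  have lhs_eq : ∀ m ∈ Finset.univ, pd j (fun w => ∑ i, pd m (fun v => Φ (w, v)) z *
        Psi ω z m i * pd i (fun v => Ψf (w, v)) z) x
      = ∑ i, (pd m (fun v => pd j (fun w => Φ (w, v)) x) z * Psi ω z m i *
            pd i (fun v => Ψf (x, v)) z
          + pd m (fun v => Φ (x, v)) z * Psi ω z m i *
            pd i (fun v => pd j (fun w => Ψf (w, v)) x) z) := by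
    intro m _
    rw [pd_sum Finset.univ _ (fun i _ =>
      ((hA m x).fun_mul (differentiableAt_const _)).fun_mul (hB i x))]
    refine Finset.sum_congr rfl fun i _ => ?_
    rw [pd_mul ((hA m x).fun_mul (differentiableAt_const _)) (hB i x),
      pd_mul (hA m x) (differentiableAt_const _), pd_const]
    rw [pdx_pdz_comm hΦ j m x z, pdx_pdz_comm hΨf j i x z]
    ring
  rw [Finset.sum_congr rfl lhs_eq]
  unfold pb
  rw [← Finset.sum_add_distrib]
  refine Finset.sum_congr rfl fun m _ => ?_
  rw [← Finset.sum_add_distrib]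

end LeibnizX

/-- Section 5: the curvature of the connection `∇⁰ = ∂ + (1/2)ad(ℋ)` is the Hamiltonian
vector field of the Ether curvature `ℛ_{jk} = (1/4){ℋ_k, ℋ_j}`:
`[∇⁰_j, ∇⁰_k] F = {ℛ_{jk}, F}`. -/
theorem nab0_curvature_is_ether_curvature (n : ℕ) (S : SymplForm (2*n))
    (H : Pt (2*n) → Pt (2*n) → Fin (2*n) → ℝ)
    (hH : ∀ k, ContDiff ℝ (⊤ : ℕ∞) fun p : Pt (2*n) × Pt (2*n) => H p.1 p.2 k)
    (hzc : ∀ x z j k,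
      pd j (fun w => H w z k) x - pd k (fun w => H w z j) x
        + pb S.ω (fun w => H x w j) (fun w => H x w k) z = 0)
    (F : Pt (2*n) → Pt (2*n) → ℝ)
    (hF : ContDiff ℝ (⊤ : ℕ∞) fun p : Pt (2*n) × Pt (2*n) => F p.1 p.2) :
    ∀ (x z : Pt (2*n)) (j k : Fin (2*n)),
      nab0 S.ω H j (nab0 S.ω H k F) x z - nab0 S.ω H k (nab0 S.ω H j F) x z
        = pb S.ω
            (fun w => (1/4) * pb S.ω (fun v => H x v k) (fun v => H x v j) w)
            (fun w => F x w) z := by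
  intro x z j k
  have hsm := S.smooth
  have hanti := S.antisymm
  have hinv := S.invertible
  have hclosed := S.closed
  have hHj : ContDiff ℝ (⊤ : ℕ∞) (fun v => H x v j) := contDiff_snd_slice (hH j) x
  have hHk : ContDiff ℝ (⊤ : ℕ∞) (fun v => H x v k) := contDiff_snd_slice (hH k) x
  have hFx : ContDiff ℝ (⊤ : ℕ∞) (fun v => F x v) := contDiff_snd_slice hF x
  have dAjk : DifferentiableAt ℝ (fun v => pd j (fun w => H w v k) x) z :=
    ((contDiff_pd_fst (hH k) j x).differentiable (by simp)) z
  have dAkj : DifferentiableAt ℝ (fun v => pd k (fun w => H w v j) x) z :=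
    ((contDiff_pd_fst (hH j) k x).differentiable (by simp)) z
  have dGj : DifferentiableAt ℝ (fun v => pd j (fun w => F w v) x) z :=
    ((contDiff_pd_fst hF j x).differentiable (by simp)) z
  have dGk : DifferentiableAt ℝ (fun v => pd k (fun w => F w v) x) z :=
    ((contDiff_pd_fst hF k x).differentiable (by simp)) z
  have dPbk : DifferentiableAt ℝ (pb S.ω (fun v => H x v k) (fun v => F x v)) z :=
    ((pb_smooth hsm hinv hHk hFx).differentiable (by simp)) z
  have dPbj : DifferentiableAt ℝ (pb S.ω (fun v => H x v j) (fun v => F x v)) z :=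
    ((pb_smooth hsm hinv hHj hFx).differentiable (by simp)) z
  -- L1 : the x-derivative of the inner connection term
  have L1 : pd j (fun w => pd k (fun w' => F w' z) w
        + 1 / 2 * pb S.ω (fun v => H w v k) (F w) z) x
      = pd j (fun w => pd k (fun w' => F w' z) w) x
        + 1 / 2 * (pb S.ω (fun v => pd j (fun w => H w v k) x) (fun v => F x v) z
          + pb S.ω (fun v => H x v k) (fun v => pd j (fun w => F w v) x) z) := by
    have d1 : DifferentiableAt ℝ (fun w => pd k (fun w' => F w' z) w) x :=
      ((contDiff_pd_fst_slice hF k z).differentiable (by simp)) x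
    have d2 : DifferentiableAt ℝ (fun w => pb S.ω (fun v => H w v k) (F w) z) x :=
      ((contDiff_pb_x hsm hinv (hH k) hF z).differentiable (by simp)) x
    have key : pd j (fun w => pb S.ω (fun v => H w v k) (F w) z) x
        = pb S.ω (fun v => pd j (fun w => H w v k) x) (fun v => F x v) z
          + pb S.ω (fun v => H x v k) (fun v => pd j (fun w => F w v) x) z :=
      pd_x_pb hsm hinv (hH k) hF j x z
    have step : pd j (fun w => pd k (fun w' => F w' z) w
          + 1 / 2 * pb S.ω (fun v => H w v k) (F w) z) x
        = pd j (fun w => pd k (fun w' => F w' z) w) x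
          + pd j (fun w => 1 / 2 * pb S.ω (fun v => H w v k) (F w) z) x :=
      pd_add d1 (d2.const_mul (1/2)) j
    rw [step, pd_const_mul d2, key]
  have L1' : pd k (fun w => pd j (fun w' => F w' z) w
        + 1 / 2 * pb S.ω (fun v => H w v j) (F w) z) x
      = pd k (fun w => pd j (fun w' => F w' z) w) x
        + 1 / 2 * (pb S.ω (fun v => pd k (fun w => H w v j) x) (fun v => F x v) z
          + pb S.ω (fun v => H x v j) (fun v => pd k (fun w => F w v) x) z) := by
    have d1 : DifferentiableAt ℝ (fun w => pd j (fun w' => F w' z) w) x :=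
      ((contDiff_pd_fst_slice hF j z).differentiable (by simp)) x
    have d2 : DifferentiableAt ℝ (fun w => pb S.ω (fun v => H w v j) (F w) z) x :=
      ((contDiff_pb_x hsm hinv (hH j) hF z).differentiable (by simp)) x
    have key : pd k (fun w => pb S.ω (fun v => H w v j) (F w) z) x
        = pb S.ω (fun v => pd k (fun w => H w v j) x) (fun v => F x v) z
          + pb S.ω (fun v => H x v j) (fun v => pd k (fun w => F w v) x) z :=
      pd_x_pb hsm hinv (hH j) hF k x z
    have step : pd k (fun w => pd j (fun w' => F w' z) w
          + 1 / 2 * pb S.ω (fun v => H w v j) (F w) z) x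
        = pd k (fun w => pd j (fun w' => F w' z) w) x
          + pd k (fun w => 1 / 2 * pb S.ω (fun v => H w v j) (F w) z) x :=
      pd_add d1 (d2.const_mul (1/2)) k
    rw [step, pd_const_mul d2, key]
  -- L2 : expanding the outer bracket against the inner connection
  have L2 : pb S.ω (fun w => H x w j) (nab0 S.ω H k F x) z
      = pb S.ω (fun v => H x v j) (fun v => pd k (fun w => F w v) x) z
        + 1 / 2 * pb S.ω (fun v => H x v j)
            (pb S.ω (fun v => H x v k) (fun v => F x v)) z := by
    have h1 : pb S.ω (fun v => H x v j)
        (fun v => pd k (fun w => F w v) x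
          + 1 / 2 * pb S.ω (fun v' => H x v' k) (fun v' => F x v') v) z
        = pb S.ω (fun v => H x v j) (fun v => pd k (fun w => F w v) x) z
          + pb S.ω (fun v => H x v j)
              (fun v => 1 / 2 * pb S.ω (fun v' => H x v' k) (fun v' => F x v') v) z :=
      pb_add₂ dGk (dPbk.const_mul (1/2))
    have h2 : pb S.ω (fun v => H x v j)
        (fun v => 1 / 2 * pb S.ω (fun v' => H x v' k) (fun v' => F x v') v) z
        = 1 / 2 * pb S.ω (fun v => H x v j)
            (pb S.ω (fun v => H x v k) (fun v => F x v)) z :=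
      pb_cmul₂ dPbk (1/2)
    calc pb S.ω (fun w => H x w j) (nab0 S.ω H k F x) z
        = pb S.ω (fun v => H x v j)
            (fun v => pd k (fun w => F w v) x
              + 1 / 2 * pb S.ω (fun v' => H x v' k) (fun v' => F x v') v) z := rfl
      _ = _ := by rw [h1, h2]
  have L2' : pb S.ω (fun w => H x w k) (nab0 S.ω H j F x) z
      = pb S.ω (fun v => H x v k) (fun v => pd j (fun w => F w v) x) z
        + 1 / 2 * pb S.ω (fun v => H x v k)
            (pb S.ω (fun v => H x v j) (fun v => F x v)) z := by
    have h1 : pb S.ω (fun v => H x v k)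
        (fun v => pd j (fun w => F w v) x
          + 1 / 2 * pb S.ω (fun v' => H x v' j) (fun v' => F x v') v) z
        = pb S.ω (fun v => H x v k) (fun v => pd j (fun w => F w v) x) z
          + pb S.ω (fun v => H x v k)
              (fun v => 1 / 2 * pb S.ω (fun v' => H x v' j) (fun v' => F x v') v) z :=
      pb_add₂ dGj (dPbj.const_mul (1/2))
    have h2 : pb S.ω (fun v => H x v k)
        (fun v => 1 / 2 * pb S.ω (fun v' => H x v' j) (fun v' => F x v') v) z
        = 1 / 2 * pb S.ω (fun v => H x v k)
            (pb S.ω (fun v => H x v j) (fun v => F x v)) z :=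
      pb_cmul₂ dPbj (1/2)
    calc pb S.ω (fun w => H x w k) (nab0 S.ω H j F x) z
        = pb S.ω (fun v => H x v k)
            (fun v => pd j (fun w => F w v) x
              + 1 / 2 * pb S.ω (fun v' => H x v' j) (fun v' => F x v') v) z := rfl
      _ = _ := by rw [h1, h2]
  -- L3 : symmetry of pure-x second derivatives
  have L3 : pd j (fun w => pd k (fun w' => F w' z) w) x
      = pd k (fun w => pd j (fun w' => F w' z) w) x :=
    pd_comm (contDiff_fst_slice hF z) j k x
  -- L4 : zero-curvature input
  have L4 : pb S.ω (fun v => pd j (fun w => H w v k) x) (fun v => F x v) z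
        - pb S.ω (fun v => pd k (fun w => H w v j) x) (fun v => F x v) z
      = - pb S.ω (pb S.ω (fun v => H x v j) (fun v => H x v k)) (fun v => F x v) z := by
    have e1 : pb S.ω (fun v => pd j (fun w => H w v k) x - pd k (fun w => H w v j) x)
          (fun v => F x v) z
        = pb S.ω (fun v => pd j (fun w => H w v k) x) (fun v => F x v) z
          - pb S.ω (fun v => pd k (fun w => H w v j) x) (fun v => F x v) z :=
      pb_sub₁ dAjk dAkj
    have e2 : (fun v => pd j (fun w => H w v k) x - pd k (fun w => H w v j) x)
        = fun v => - pb S.ω (fun v' => H x v' j) (fun v' => H x v' k) v :=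
      funext fun v => by have := hzc x v j k; linarith
    rw [← e1, e2]
    exact pb_neg₁ z
  -- L5 : Jacobi identity combination
  have J := jacobi hsm hanti hinv hclosed hHj hHk hFx z
  have A1 : pb S.ω (fun v => H x v k)
        (pb S.ω (fun v => F x v) (fun v => H x v j)) z
      = - pb S.ω (fun v => H x v k)
          (pb S.ω (fun v => H x v j) (fun v => F x v)) z := by
    have e : pb S.ω (fun v => F x v) (fun v => H x v j)
        = fun v => - pb S.ω (fun v' => H x v' j) (fun v' => F x v') v :=
      funext fun v => pb_antisymm hanti hinv _ _ v
    rw [e]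
    exact pb_neg₂ z
  have A2 : pb S.ω (fun v => F x v)
        (pb S.ω (fun v => H x v j) (fun v => H x v k)) z
      = - pb S.ω (pb S.ω (fun v => H x v j) (fun v => H x v k)) (fun v => F x v) z :=
    pb_antisymm hanti hinv _ _ z
  -- L6 : the right-hand side
  have L6 : pb S.ω (fun w => 1 / 4 * pb S.ω (fun v => H x v k) (fun v => H x v j) w)
        (fun w => F x w) z
      = - (1/4) * pb S.ω (pb S.ω (fun v => H x v j) (fun v => H x v k))
          (fun v => F x v) z := by
    have dkj : DifferentiableAt ℝ (pb S.ω (fun v => H x v k) (fun v => H x v j)) z :=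
      ((pb_smooth hsm hinv hHk hHj).differentiable (by simp)) z
    have h1 : pb S.ω (fun w => 1 / 4 * pb S.ω (fun v => H x v k) (fun v => H x v j) w)
          (fun w => F x w) z
        = 1 / 4 * pb S.ω (pb S.ω (fun v => H x v k) (fun v => H x v j))
            (fun w => F x w) z :=
      pb_cmul₁ dkj (1/4)
    have e : pb S.ω (fun v => H x v k) (fun v => H x v j)
        = fun v => - pb S.ω (fun v' => H x v' j) (fun v' => H x v' k) v :=
      funext fun v => pb_antisymm hanti hinv _ _ v
    have h2 : pb S.ω (pb S.ω (fun v => H x v k) (fun v => H x v j)) (fun w => F x w) z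
        = - pb S.ω (pb S.ω (fun v => H x v j) (fun v => H x v k)) (fun w => F x w) z := by
      rw [e]
      exact pb_neg₁ z
    rw [h1, h2]
    ring
  simp only [nab0]
  rw [L1, L1', L3, L6]
  rw [L2, L2']
  linarith [L4, J, A1, A2]
end
end

section
/- Monodromy factorization for auto-linear vector fields (Corollary A.5, formula (A.23)): Let Γ^k_{ij} : ℝ^N → ℝ be a smooth torsion-free affine connection (Γ^k_{ij} = Γ^k_{ji}) and let u : ℝ^N → ℝ^N be a smooth vector field whose flow X^t (solving dX/dt = u(X), X^0(x) = x) exists for t ∈ [0,T] near a fixed point y ∈ ℝ^N. Let V(t) be the Γ-parallel transport along the trajectory t ↦ X^t(y), i.e. the solution of dV^i_k/dt = −Σ_{j,m} u^j(X^t(y)) Γ^i_{mj}(X^t(y)) V^m_k with V(0) = I. Assume u is auto-linear along the trajectory: (∇_u(∇u))(X^τ(y)) = 0 for all τ ∈ [0,T], where (∇u)^k_j = ∂_{z^j}u^k + Σ_s Γ^k_{sj}u^s and (∇_u(∇u))^k_j = Σ_r u^r(∂_{z^r}(∇u)^k_j + Σ_m Γ^k_{mr}(∇u)^m_j − Σ_m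 Γ^m_{jr}(∇u)^k_m). Then the Jacobian of the flow at y factorizes as (∂X^t(x)/∂x)|_{x=y} = V(t)·exp(t·∇u(y)), where exp is the matrix exponential. In particular, for a periodic trajectory the monodromy matrix factors into the geometric monodromy (holonomy of Γ) and the dynamical monodromy with generator ∇u(y). -/
open scoped BigOperators
noncomputable section

/-- The covariant derivative matrix `(∇u)^k_j = ∂_j u^k + Σ_s Γ^k_{sj} u^s` of a vector
field `u` with respect to an affine connection `Γ`. -/
noncomputable def covDu {N : ℕ} (Γ : Pt N → Fin N → Fin N → Fin N → ℝ)
    (u : Pt N → Pt N) (z : Pt N) : Matrix (Fin N) (Fin N) ℝ :=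
  Matrix.of fun k j => pd j (fun w => u w k) z + ∑ s', Γ z k s' j * u z s'

/-! ### Auxiliary material for the proof -/

open Set

section ExpAux
attribute [local instance] Matrix.linftyOpNormedAddCommGroup Matrix.linftyOpNormedRing
  Matrix.linftyOpNormedAlgebra

/-- Entrywise derivative of `t ↦ exp (t • M)`. -/
lemma exp_entry_hasDerivAt {N : ℕ} (M : Matrix (Fin N) (Fin N) ℝ) (t : ℝ) (i k : Fin N) :
    HasDerivAt (fun τ : ℝ => NormedSpace.exp (τ • M) i k)
      ((NormedSpace.exp (t • M) * M) i k) t := by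
  have h := hasDerivAt_exp_smul_const (𝕂 := ℝ) M t
  let ℓ : Matrix (Fin N) (Fin N) ℝ →ₗ[ℝ] ℝ :=
    { toFun := fun A => A i k, map_add' := fun _ _ => rfl, map_smul' := fun _ _ => rfl }
  have := ℓ.toContinuousLinearMap.hasFDerivAt.comp_hasDerivAt t h
  exact this

lemma exp_mul_comm {N : ℕ} (M : Matrix (Fin N) (Fin N) ℝ) (t : ℝ) :
    NormedSpace.exp (t • M) * M = M * NormedSpace.exp (t • M) :=
  (hasDerivAt_exp_smul_const (𝕂 := ℝ) M t).unique (hasDerivAt_exp_smul_const' (𝕂 := ℝ) M t)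

lemma exp_zero_smul {N : ℕ} (M : Matrix (Fin N) (Fin N) ℝ) :
    NormedSpace.exp ((0:ℝ) • M) = 1 := by
  simp [NormedSpace.exp_zero]
end ExpAux

/-- Linear ODE with zero initial condition has the zero solution (entrywise form). -/
lemma ode_zero {N : ℕ} {T : ℝ} (B f : ℝ → Matrix (Fin N) (Fin N) ℝ)
    (hB : ∀ i j, Continuous fun t => B t i j)
    (hf : ∀ t ∈ Icc (0:ℝ) T, ∀ i k,
        HasDerivAt (fun τ => f τ i k) (∑ j, B t i j * f t j k) t)
    (hf0 : f 0 = 0) : ∀ t ∈ Icc (0:ℝ) T, f t = 0 := by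
  intro t ht
  have hT : (0:ℝ) ≤ T := le_trans ht.1 ht.2
  set E := Fin N → Fin N → ℝ
  let g : ℝ → E := fun τ i k => f τ i k
  let g' : ℝ → E := fun τ i k => if h : τ ∈ Icc (0:ℝ) T then ∑ j, B τ i j * f τ j k else 0
  have hg : ∀ τ ∈ Icc (0:ℝ) T, HasDerivAt g (g' τ) τ := by
    intro τ hτ
    refine hasDerivAt_pi.2 fun i => hasDerivAt_pi.2 fun k => ?_
    simpa [g', hτ.1, hτ.2] using hf τ hτ i k
  let Bf : ℝ → E := fun τ i j => B τ i j
  have hBc : ContinuousOn Bf (Icc 0 T) :=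
    (continuous_pi fun i => continuous_pi fun j => hB i j).continuousOn
  obtain ⟨C, hC⟩ := isCompact_Icc.exists_bound_of_continuousOn hBc
  set K : ℝ := N * max C 0 with hK
  have hKnn : 0 ≤ K := by positivity
  have hBentry : ∀ τ ∈ Icc (0:ℝ) T, ∀ i j, |B τ i j| ≤ max C 0 := by
    intro τ hτ i j
    calc |B τ i j| = ‖Bf τ i j‖ := rfl
      _ ≤ ‖Bf τ i‖ := norm_le_pi_norm _ j
      _ ≤ ‖Bf τ‖ := norm_le_pi_norm _ i
      _ ≤ C := hC τ hτ
      _ ≤ max C 0 := le_max_left _ _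
  have hfentry : ∀ τ, ∀ j k, |f τ j k| ≤ ‖g τ‖ := by
    intro τ j k
    calc |f τ j k| = ‖g τ j k‖ := rfl
      _ ≤ ‖g τ j‖ := norm_le_pi_norm _ k
      _ ≤ ‖g τ‖ := norm_le_pi_norm _ j
  have bound : ∀ τ ∈ Ico (0:ℝ) T, ‖g' τ‖ ≤ K * ‖g τ‖ + 0 := by
    intro τ hτ
    have hτ' : τ ∈ Icc (0:ℝ) T := Ico_subset_Icc_self hτ
    rw [add_zero]
    have hnn : 0 ≤ K * ‖g τ‖ := mul_nonneg hKnn (norm_nonneg _)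
    refine (pi_norm_le_iff_of_nonneg hnn).2 fun i => ?_
    refine (pi_norm_le_iff_of_nonneg hnn).2 fun k => ?_
    have : g' τ i k = ∑ j, B τ i j * f τ j k := dif_pos hτ'
    rw [Real.norm_eq_abs, this]
    calc |∑ j, B τ i j * f τ j k| ≤ ∑ j, |B τ i j * f τ j k| := Finset.abs_sum_le_sum_abs _ _
      _ ≤ ∑ _j : Fin N, max C 0 * ‖g τ‖ := by
          refine Finset.sum_le_sum fun j _ => ?_
          rw [abs_mul]
          exact mul_le_mul (hBentry τ hτ' i j) (hfentry τ j k) (abs_nonneg _) (le_max_right _ _)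
      _ = K * ‖g τ‖ := by rw [Finset.sum_const, Finset.card_univ, Fintype.card_fin,
          nsmul_eq_mul, hK, mul_assoc]
  have hcont : ContinuousOn g (Icc 0 T) := fun τ hτ =>
    (hg τ hτ).continuousAt.continuousWithinAt
  have := norm_le_gronwallBound_of_norm_deriv_right_le hcont
    (fun x hx => (hg x (Ico_subset_Icc_self hx)).hasDerivWithinAt) (δ := 0)
    (by simp [g, hf0]; exact (norm_zero (E := Fin N → Fin N → ℝ)).le) bound t ht
  rw [gronwallBound_ε0_δ0] at this
  have hzero : g t = 0 := norm_le_zero_iff.1 this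
  funext i k
  exact congrFun (congrFun hzero i) k

/-- Uniqueness for linear matrix ODEs, entrywise form. -/
lemma ode_unique {N : ℕ} {T : ℝ} (B f g : ℝ → Matrix (Fin N) (Fin N) ℝ)
    (hB : ∀ i j, Continuous fun t => B t i j)
    (hf : ∀ t ∈ Icc (0:ℝ) T, ∀ i k,
        HasDerivAt (fun τ => f τ i k) (∑ j, B t i j * f t j k) t)
    (hg : ∀ t ∈ Icc (0:ℝ) T, ∀ i k,
        HasDerivAt (fun τ => g τ i k) (∑ j, B t i j * g t j k) t)
    (h0 : f 0 = g 0) : ∀ t ∈ Icc (0:ℝ) T, f t = g t := by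
  intro t ht
  have := ode_zero B (fun τ => f τ - g τ) hB ?_ (by simp [h0]) t ht
  · exact sub_eq_zero.1 this
  · intro τ hτ i k
    have h1 : HasDerivAt (fun σ => f σ i k - g σ i k)
        ((∑ j, B τ i j * f τ j k) - ∑ j, B τ i j * g τ j k) τ :=
      (hf τ hτ i k).sub (hg τ hτ i k)
    have h2 : (∑ j, B τ i j * f τ j k) - (∑ j, B τ i j * g τ j k)
        = ∑ j, B τ i j * (f τ - g τ) j k := by
      rw [← Finset.sum_sub_distrib]
      exact Finset.sum_congr rfl fun j _ => by rw [Matrix.sub_apply, mul_sub]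
    rw [h2] at h1
    exact h1

/-- spatial partial derivatives as directional derivatives of the joint map -/
lemma spatial_eq {N : ℕ} (F : ℝ × Pt N → ℝ) (hF : ContDiff ℝ (⊤ : ℕ∞) F)
    (τ : ℝ) (x w : Pt N) :
    fderiv ℝ (fun z => F (τ, z)) x w = fderiv ℝ F (τ, x) (0, w) := by
  have hι : HasFDerivAt (fun z : Pt N => ((τ : ℝ), z))
      (ContinuousLinearMap.inr ℝ ℝ (Pt N)) x := hasFDerivAt_prodMk_right τ x
  have hc : HasFDerivAt (fun z => F (τ, z))
      ((fderiv ℝ F (τ, x)).comp (ContinuousLinearMap.inr ℝ ℝ (Pt N))) x :=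
    ((hF.differentiable (by simp) (τ, x)).hasFDerivAt).comp x hι
  rw [hc.fderiv]
  simp

/-- temporal derivative as directional derivative of the joint map -/
lemma temporal_hasDerivAt {N : ℕ} (F : ℝ × Pt N → ℝ) (hF : Differentiable ℝ F)
    (τ : ℝ) (x : Pt N) :
    HasDerivAt (fun σ => F (σ, x)) (fderiv ℝ F (τ, x) (1, 0)) τ := by
  have hcurve : HasDerivAt (fun σ : ℝ => (σ, x)) ((1 : ℝ), (0 : Pt N)) τ :=
    (hasDerivAt_id τ).prodMk (hasDerivAt_const τ x)
  exact ((hF (τ, x)).hasFDerivAt).comp_hasDerivAt τ hcurve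

/-- expansion of a directional derivative along coordinates -/
lemma fderiv_expand {N : ℕ} (f : Pt N → ℝ) (p : Pt N) (hf : DifferentiableAt ℝ f p)
    (w : Pt N) : fderiv ℝ f p w = ∑ j, w j * pd j f p := by
  have h1 : ∀ j, (w j) • (Pi.single j (1:ℝ) : Pt N) = Pi.single j (w j) := by
    intro j; rw [← Pi.single_smul, smul_eq_mul, mul_one]
  have hw : w = ∑ j, (w j) • (Pi.single j (1:ℝ) : Pt N) := by
    simp_rw [h1]; exact (Finset.univ_sum_single w).symm
  conv_lhs => rw [hw]
  rw [map_sum]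
  refine Finset.sum_congr rfl fun j _ => ?_
  rw [map_smul, smul_eq_mul]
  rfl

/-- The variational equation: the Jacobian entries of the flow satisfy the linearized ODE. -/
lemma variational {N : ℕ} (u : Pt N → Pt N) (hu : ∀ k, ContDiff ℝ (⊤ : ℕ∞) fun z => u z k)
    {T : ℝ} (hT : 0 < T) (y : Pt N) (X : ℝ → Pt N → Pt N)
    (hXsmooth : ∀ i, ContDiff ℝ (⊤ : ℕ∞) fun q : ℝ × Pt N => X q.1 q.2 i)
    (hXode : ∀ t ∈ Icc (0:ℝ) T, ∀ x i, HasDerivAt (fun τ => X τ x i) (u (X t x) i) t) :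
    ∀ t ∈ Icc (0:ℝ) T, ∀ i k,
      HasDerivAt (fun τ => pd k (fun x => X τ x i) y)
        (∑ j, pd j (fun w => u w i) (X t y) * pd k (fun x => X t x j) y) t := by
  intro t ht i k
  set F : Fin N → (ℝ × Pt N → ℝ) := fun i q => X q.1 q.2 i with hFdef
  have hFs : ∀ i, ContDiff ℝ (⊤ : ℕ∞) (F i) := hXsmooth
  have hFd : ∀ i, Differentiable ℝ (F i) := fun i => (hFs i).differentiable (by simp)
  have ha : ∀ (τ : ℝ) (i : Fin N), pd k (fun x => X τ x i) y
      = fderiv ℝ (F i) (τ, y) (0, Pi.single k 1) := fun τ i =>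
    spatial_eq (F i) (hFs i) τ y (Pi.single k 1)
  set G : Fin N → (ℝ × Pt N → ℝ) := fun i q => fderiv ℝ (F i) q (0, Pi.single k 1) with hGdef
  have hGs : ∀ i, ContDiff ℝ (⊤ : ℕ∞) (G i) := fun i =>
    ((hFs i).fderiv_right (by simp)).clm_apply contDiff_const
  have hφ : ∀ (i : Fin N) (τ : ℝ), HasDerivAt (fun σ => G i (σ, y))
      (fderiv ℝ (G i) (τ, y) (1, 0)) τ := fun i τ =>
    temporal_hasDerivAt (G i) ((hGs i).differentiable (by simp)) τ y
  set D2 : ℝ → ℝ := fun τ => fderiv ℝ (G i) (τ, y) (1, 0) with hD2def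
  set ρ : ℝ → ℝ := fun τ =>
    ∑ j, pd j (fun w => u w i) (X τ y) * pd k (fun x => X τ x j) y with hρdef
  have hfun : (fun τ => pd k (fun x => X τ x i) y) = fun τ => G i (τ, y) := by
    funext τ; exact ha τ i
  have hD2ρ : ∀ τ ∈ Ioo (0:ℝ) T, D2 τ = ρ τ := by
    intro τ hτ
    have hτ' : τ ∈ Icc (0:ℝ) T := Ioo_subset_Icc_self hτ
    have hFd2 : DifferentiableAt ℝ (fderiv ℝ (F i)) (τ, y) :=
      (((hFs i).fderiv_right (m := (⊤ : ℕ∞)) (by simp)).differentiable (by simp)) (τ, y)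
    have hder : HasFDerivAt (G i)
        ((fderiv ℝ (F i) (τ, y)).comp (0 : (ℝ × Pt N) →L[ℝ] (ℝ × Pt N))
          + (fderiv ℝ (fderiv ℝ (F i)) (τ, y)).flip ((0 : ℝ), Pi.single k 1)) (τ, y) :=
      hFd2.hasFDerivAt.clm_apply (hasFDerivAt_const _ _)
    have hd : D2 τ = fderiv ℝ (fderiv ℝ (F i)) (τ, y) (1, 0) (0, Pi.single k 1) := by
      simp only [hD2def]
      rw [hder.fderiv]
      simp
    have hsymm : fderiv ℝ (fderiv ℝ (F i)) (τ, y) (1, 0) (0, Pi.single k 1)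
        = fderiv ℝ (fderiv ℝ (F i)) (τ, y) (0, Pi.single k 1) (1, 0) :=
      ((hFs i).contDiffAt.isSymmSndFDerivAt (by simp; exact WithTop.coe_le_coe.2 le_top)) _ _
    set D1 : ℝ × Pt N → ℝ := fun q => fderiv ℝ (F i) q (1, 0) with hD1def
    have hder1 : HasFDerivAt D1
        ((fderiv ℝ (F i) (τ, y)).comp (0 : (ℝ × Pt N) →L[ℝ] (ℝ × Pt N))
          + (fderiv ℝ (fderiv ℝ (F i)) (τ, y)).flip ((1 : ℝ), (0 : Pt N))) (τ, y) :=
      hFd2.hasFDerivAt.clm_apply (hasFDerivAt_const _ _)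
    have hf : fderiv ℝ (fderiv ℝ (F i)) (τ, y) (0, Pi.single k 1) (1, 0)
        = fderiv ℝ D1 (τ, y) (0, Pi.single k 1) := by
      rw [hder1.fderiv]
      simp
    have hev : D1 =ᶠ[nhds (τ, y)] fun q => u (X q.1 q.2) i := by
      have hmem : Ioo (0:ℝ) T ×ˢ (univ : Set (Pt N)) ∈ nhds (τ, y) :=
        (isOpen_Ioo.prod isOpen_univ).mem_nhds ⟨hτ, trivial⟩
      refine Filter.eventuallyEq_of_mem hmem fun q hq => ?_
      have hq1 : q.1 ∈ Icc (0:ℝ) T := Ioo_subset_Icc_self hq.1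
      have h1 : HasDerivAt (fun σ => F i (σ, q.2)) (D1 q) q.1 :=
        temporal_hasDerivAt (F i) (hFd i) q.1 q.2
      have h2 : HasDerivAt (fun σ => F i (σ, q.2)) (u (X q.1 q.2) i) q.1 :=
        hXode q.1 hq1 q.2 i
      exact h1.unique h2
    have hfd : fderiv ℝ D1 (τ, y) = fderiv ℝ (fun q : ℝ × Pt N => u (X q.1 q.2) i) (τ, y) :=
      hev.fderiv_eq
    set H : ℝ × Pt N → Pt N := fun q => X q.1 q.2 with hHdef
    have hHs : ContDiff ℝ (⊤ : ℕ∞) H := contDiff_pi.2 hXsmooth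
    have hui : ContDiff ℝ (⊤ : ℕ∞) (fun w => u w i) := hu i
    have hchain : fderiv ℝ (fun q : ℝ × Pt N => u (X q.1 q.2) i) (τ, y)
        = (fderiv ℝ (fun w => u w i) (X τ y)).comp (fderiv ℝ H (τ, y)) :=
      by have := fderiv_comp (τ, y) (hui.differentiable (by simp) (X τ y)) (hHs.differentiable (by simp) (τ, y)); exact this
    have hpi : fderiv ℝ H (τ, y) = ContinuousLinearMap.pi fun j => fderiv ℝ (F j) (τ, y) :=
      fderiv_pi fun j => hFd j (τ, y)
    have hw : ∀ j, fderiv ℝ H (τ, y) (0, Pi.single k 1) j = pd k (fun x => X τ x j) y := by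
      intro j
      rw [hpi, ContinuousLinearMap.pi_apply, ← ha τ j]
    calc D2 τ = fderiv ℝ D1 (τ, y) (0, Pi.single k 1) := by rw [hd, hsymm, hf]
      _ = fderiv ℝ (fun w => u w i) (X τ y) (fderiv ℝ H (τ, y) (0, Pi.single k 1)) := by
          rw [hfd, hchain]; rfl
      _ = ∑ j, fderiv ℝ H (τ, y) (0, Pi.single k 1) j * pd j (fun w => u w i) (X τ y) :=
          fderiv_expand _ _ (hui.differentiable (by simp) (X τ y)) _
      _ = ρ τ := by
          refine Finset.sum_congr rfl fun j _ => ?_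
          rw [hw j, mul_comm]
  have hD2cont : Continuous D2 := by
    have h1 : ContDiff ℝ (⊤ : ℕ∞) fun q : ℝ × Pt N => fderiv ℝ (G i) q (1, 0) :=
      ((hGs i).fderiv_right (by simp)).clm_apply contDiff_const
    exact h1.continuous.comp (continuous_id.prodMk continuous_const)
  have hρcont : Continuous ρ := by
    have hXy : Continuous fun τ => X τ y := by
      have : Continuous fun τ : ℝ => ((τ, y) : ℝ × Pt N) := continuous_id.prodMk continuous_const
      exact (contDiff_pi.2 hXsmooth).continuous.comp this
    refine continuous_finset_sum _ fun j _ => Continuous.mul ?_ ?_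
    · have hpdc : Continuous (pd j (fun w => u w i)) :=
        (((hu i).fderiv_right (m := (⊤ : ℕ∞)) (by simp)).clm_apply contDiff_const).continuous
      exact hpdc.comp hXy
    · have : (fun τ => pd k (fun x => X τ x j) y) = fun τ => G j (τ, y) := by
        funext τ; exact ha τ j
      rw [this]
      exact (hGs j).continuous.comp (continuous_id.prodMk continuous_const)
  have hIcc : ∀ τ ∈ Icc (0:ℝ) T, D2 τ = ρ τ := by
    intro τ hτ
    have hclosed : IsClosed {σ : ℝ | D2 σ = ρ σ} := isClosed_eq hD2cont hρcont
    have hsub : closure (Ioo (0:ℝ) T) ⊆ {σ : ℝ | D2 σ = ρ σ} :=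
      closure_minimal (fun σ hσ => hD2ρ σ hσ) hclosed
    rw [closure_Ioo hT.ne] at hsub
    exact hsub hτ
  rw [hfun]
  have := hφ i t
  rwa [show fderiv ℝ (G i) (t, y) (1, 0) = ρ t from hIcc t ht] at this

/-- Corollary A.5, formula (A.23): if the vector field `u` is auto-linear along the
trajectory, `∇_u(∇u) = 0`, then the Jacobian of its flow at `y` factorizes into the
`Γ`-parallel transport and a matrix exponential: `dX^t(y) = V(t)·exp(t·∇u(y))`. For a
periodic trajectory this factors the monodromy matrix into the geometric monodromy
(the holonomy of `Γ`) and the dynamical monodromy with generator `∇u(y)`. -/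
theorem autolinear_monodromy_factorization (N : ℕ)
    -- a torsion-free affine connection
    (Γ : Pt N → Fin N → Fin N → Fin N → ℝ)
    (hΓsmooth : ∀ k i j, ContDiff ℝ (⊤ : ℕ∞) fun z => Γ z k i j)
    (hΓsymm : ∀ z k i j, Γ z k i j = Γ z k j i)
    -- a smooth vector field and its flow, jointly smooth
    (u : Pt N → Pt N) (hu : ∀ k, ContDiff ℝ (⊤ : ℕ∞) fun z => u z k)
    (T : ℝ) (hT : 0 ≤ T) (y : Pt N)
    (X : ℝ → Pt N → Pt N)
    (hXsmooth : ∀ i, ContDiff ℝ (⊤ : ℕ∞) fun q : ℝ × Pt N => X q.1 q.2 i)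
    (hX0 : ∀ x, X 0 x = x)
    (hXode : ∀ t ∈ Set.Icc (0:ℝ) T, ∀ x i,
      HasDerivAt (fun τ => X τ x i) (u (X t x) i) t)
    -- the `Γ`-parallel transport `V(t)` along the trajectory `t ↦ X^t(y)`
    (V : ℝ → Matrix (Fin N) (Fin N) ℝ)
    (hV0 : V 0 = 1)
    (hVode : ∀ t ∈ Set.Icc (0:ℝ) T, ∀ i k,
      HasDerivAt (fun τ => V τ i k)
        (-∑ j, ∑ m, u (X t y) j * Γ (X t y) i m j * V t m k) t)
    -- `u` is auto-linear along the trajectory: `∇_u(∇u) = 0`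
    (hauto : ∀ τ ∈ Set.Icc (0:ℝ) T, ∀ k j,
      ∑ r, u (X τ y) r * (pd r (fun w => covDu Γ u w k j) (X τ y)
        + ∑ m, Γ (X τ y) k m r * covDu Γ u (X τ y) m j
        - ∑ m, Γ (X τ y) m j r * covDu Γ u (X τ y) k m) = 0) :
    ∀ t ∈ Set.Icc (0:ℝ) T,
      (Matrix.of fun i k => pd k (fun x => X t x i) y)
        = V t * NormedSpace.exp (t • covDu Γ u y) := by
  -- the Jacobian at time 0 is the identity
  have hJ0 : (Matrix.of fun i k => pd k (fun x => X 0 x i) y)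
      = (1 : Matrix (Fin N) (Fin N) ℝ) := by
    ext i k
    have h1 : (fun x : Pt N => X 0 x i) = fun x : Pt N => x i := by
      funext x; rw [hX0]
    have h2 : fderiv ℝ (fun x : Pt N => x i) y
        = (ContinuousLinearMap.proj i : Pt N →L[ℝ] ℝ) :=
      (ContinuousLinearMap.proj i : Pt N →L[ℝ] ℝ).hasFDerivAt.fderiv
    simp only [Matrix.of_apply, pd, h1, h2]
    rcases eq_or_ne i k with h | h
    · subst h; simp [Matrix.one_apply]
    · simp [Matrix.one_apply, h, Pi.single_apply, Ne.symm h]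
  rcases eq_or_lt_of_le hT with hT0 | hTpos
  · -- degenerate case T = 0
    intro t ht
    have ht0 : t = 0 := le_antisymm (hT0 ▸ ht.2) ht.1
    subst ht0
    rw [hJ0, hV0, exp_zero_smul, one_mul]
  -- main case 0 < T
  set M0 : Matrix (Fin N) (Fin N) ℝ := covDu Γ u y with hM0def
  set M : ℝ → Matrix (Fin N) (Fin N) ℝ := fun τ => covDu Γ u (X τ y) with hMdef
  set A : ℝ → Matrix (Fin N) (Fin N) ℝ :=
    fun τ => Matrix.of fun i m => ∑ j, u (X τ y) j * Γ (X τ y) i m j with hAdef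
  set Et : ℝ → Matrix (Fin N) (Fin N) ℝ := fun τ => NormedSpace.exp (τ • M0) with hEdef
  set J : ℝ → Matrix (Fin N) (Fin N) ℝ :=
    fun τ => Matrix.of fun i k => pd k (fun x => X τ x i) y with hJdef
  have hXy : Continuous fun τ => X τ y := by
    have : Continuous fun τ : ℝ => ((τ, y) : ℝ × Pt N) := continuous_id.prodMk continuous_const
    exact (contDiff_pi.2 hXsmooth).continuous.comp this
  -- smoothness of the entries of covDu
  have hcov : ∀ k j, ContDiff ℝ (⊤ : ℕ∞) fun w => covDu Γ u w k j := by
    intro k j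
    have h1 : ContDiff ℝ (⊤ : ℕ∞) fun w => fderiv ℝ (fun z => u z k) w (Pi.single j 1) :=
      ((hu k).fderiv_right (by simp)).clm_apply contDiff_const
    have h2 : ContDiff ℝ (⊤ : ℕ∞) fun w => ∑ s', Γ w k s' j * u w s' :=
      ContDiff.sum fun s _ => (hΓsmooth k s j).mul (hu s)
    exact h1.add h2
  have hMc : ∀ k j, Continuous fun τ => M τ k j := fun k j =>
    ((hcov k j).continuous).comp hXy
  have huc : ∀ j, Continuous fun τ => u (X τ y) j := fun j => ((hu j).continuous).comp hXy
  have hAc : ∀ i m, Continuous fun τ => A τ i m := by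
    intro i m
    have he : (fun τ => A τ i m) = fun τ => ∑ j, u (X τ y) j * Γ (X τ y) i m j := rfl
    rw [he]
    refine continuous_finset_sum _ fun j _ => (huc j).mul ?_
    have hγ : Continuous fun τ => Γ (X τ y) i m j := (hΓsmooth i m j).continuous.comp hXy
    exact hγ
  -- parallel-transport ODE in matrix form
  have hV' : ∀ t ∈ Icc (0:ℝ) T, ∀ i k,
      HasDerivAt (fun τ => V τ i k) (((-(A t)) * V t) i k) t := by
    intro t ht i k
    have h := hVode t ht i k
    have heq : ((-(A t)) * V t) i k
        = -∑ j, ∑ m, u (X t y) j * Γ (X t y) i m j * V t m k := by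
      calc ((-(A t)) * V t) i k = ∑ m, -(A t i m * V t m k) := by
            simp [Matrix.mul_apply, Matrix.neg_apply, neg_mul]
        _ = -∑ m, ∑ j, u (X t y) j * Γ (X t y) i m j * V t m k := by
            rw [Finset.sum_neg_distrib]
            congr 1
            refine Finset.sum_congr rfl fun m _ => ?_
            have hA : A t i m = ∑ j, u (X t y) j * Γ (X t y) i m j := rfl
            rw [hA, Finset.sum_mul]
        _ = -∑ j, ∑ m, u (X t y) j * Γ (X t y) i m j * V t m k := by
            rw [Finset.sum_comm]
    rw [heq]
    exact h
  -- derivative of M along the trajectory (auto-linearity)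
  have hM' : ∀ t ∈ Icc (0:ℝ) T, ∀ k j,
      HasDerivAt (fun τ => M τ k j) ((M t * A t - A t * M t) k j) t := by
    intro t ht k j
    have hcurve : HasDerivAt (fun τ => X τ y) (u (X t y)) t :=
      hasDerivAt_pi.2 fun i' => hXode t ht y i'
    have hm : DifferentiableAt ℝ (fun w => covDu Γ u w k j) (X t y) :=
      (hcov k j).differentiable (by simp) (X t y)
    have h1 : HasDerivAt (fun τ => covDu Γ u (X τ y) k j)
        (fderiv ℝ (fun w => covDu Γ u w k j) (X t y) (u (X t y))) t :=
      by have := (hm.hasFDerivAt).comp_hasDerivAt t hcurve; exact this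
    have h2 : fderiv ℝ (fun w => covDu Γ u w k j) (X t y) (u (X t y))
        = ∑ r, u (X t y) r * pd r (fun w => covDu Γ u w k j) (X t y) :=
      fderiv_expand _ _ hm _
    have h3 : ∑ r, u (X t y) r * pd r (fun w => covDu Γ u w k j) (X t y)
        = (M t * A t - A t * M t) k j := by
      have h := hauto t ht k j
      have hexp : ∑ r, u (X t y) r * (pd r (fun w => covDu Γ u w k j) (X t y)
            + ∑ m, Γ (X t y) k m r * covDu Γ u (X t y) m j
            - ∑ m, Γ (X t y) m j r * covDu Γ u (X t y) k m)
          = (∑ r, u (X t y) r * pd r (fun w => covDu Γ u w k j) (X t y))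
            + (∑ r, u (X t y) r * ∑ m, Γ (X t y) k m r * covDu Γ u (X t y) m j)
            - (∑ r, u (X t y) r * ∑ m, Γ (X t y) m j r * covDu Γ u (X t y) k m) := by
        simp only [mul_add, mul_sub]
        rw [Finset.sum_sub_distrib, Finset.sum_add_distrib]
      rw [hexp] at h
      have hMA : (M t * A t) k j
          = ∑ r, u (X t y) r * ∑ m, Γ (X t y) m j r * covDu Γ u (X t y) k m := by
        rw [Matrix.mul_apply]
        have hA : ∀ m, A t m j = ∑ r, u (X t y) r * Γ (X t y) m j r := fun m => rfl
        have hMM : ∀ m, M t k m = covDu Γ u (X t y) k m := fun m => rfl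
        simp_rw [hA, hMM, Finset.mul_sum]
        rw [Finset.sum_comm]
        exact Finset.sum_congr rfl fun r _ => Finset.sum_congr rfl fun m _ => by ring
      have hAM : (A t * M t) k j
          = ∑ r, u (X t y) r * ∑ m, Γ (X t y) k m r * covDu Γ u (X t y) m j := by
        rw [Matrix.mul_apply]
        have hA : ∀ m, A t k m = ∑ r, u (X t y) r * Γ (X t y) k m r := fun m => rfl
        have hMM : ∀ m, M t m j = covDu Γ u (X t y) m j := fun m => rfl
        simp_rw [hA, hMM, Finset.sum_mul, Finset.mul_sum]
        rw [Finset.sum_comm]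
        exact Finset.sum_congr rfl fun r _ => Finset.sum_congr rfl fun m _ => by ring
      rw [Matrix.sub_apply, hMA, hAM]
      linarith
    rw [h2, h3] at h1
    exact h1
  -- the intertwining relation M t * V t = V t * M0
  have hM00 : M 0 = M0 := by
    simp only [hMdef, hM0def, hX0 y]
  have hP : ∀ t ∈ Icc (0:ℝ) T, M t * V t - V t * M0 = 0 := by
    refine ode_zero (fun τ => -(A τ)) (fun τ => M τ * V τ - V τ * M0)
      (fun i j => (hAc i j).neg) ?_ ?_
    · intro τ hτ i k
      have hMV : HasDerivAt (fun σ => ∑ j, M σ i j * V σ j k)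
          (∑ j, ((M τ * A τ - A τ * M τ) i j * V τ j k
            + M τ i j * ((-(A τ)) * V τ) j k)) τ :=
        HasDerivAt.fun_sum fun j _ => (hM' τ hτ i j).fun_mul (hV' τ hτ j k)
      have hVM0 : HasDerivAt (fun σ => ∑ j, V σ i j * M0 j k)
          (∑ j, ((-(A τ)) * V τ) i j * M0 j k) τ :=
        HasDerivAt.fun_sum fun j _ => (hV' τ hτ i j).mul_const (M0 j k)
      have hsum := hMV.fun_sub hVM0
      have hfun2 : (fun σ => (∑ j, M σ i j * V σ j k) - ∑ j, V σ i j * M0 j k)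
          = fun σ => (M σ * V σ - V σ * M0) i k := by
        funext σ; rw [Matrix.sub_apply, Matrix.mul_apply, Matrix.mul_apply]
      rw [hfun2] at hsum
      have e1 : (∑ j, ((M τ * A τ - A τ * M τ) i j * V τ j k
              + M τ i j * ((-(A τ)) * V τ) j k))
            - (∑ j, ((-(A τ)) * V τ) i j * M0 j k)
          = ((M τ * A τ - A τ * M τ) * V τ + M τ * ((-(A τ)) * V τ)
              - ((-(A τ)) * V τ) * M0) i k := by
        rw [Finset.sum_add_distrib, Matrix.sub_apply, Matrix.add_apply,
          Matrix.mul_apply, Matrix.mul_apply, Matrix.mul_apply]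
      rw [e1] at hsum
      have e2 : (M τ * A τ - A τ * M τ) * V τ + M τ * ((-(A τ)) * V τ)
            - ((-(A τ)) * V τ) * M0
          = (-(A τ)) * (M τ * V τ - V τ * M0) := by noncomm_ring
      rw [e2] at hsum
      have e3 : ((-(A τ)) * (M τ * V τ - V τ * M0)) i k
          = ∑ j, (-(A τ)) i j * (M τ * V τ - V τ * M0) j k := Matrix.mul_apply
      rw [e3] at hsum
      exact hsum
    · show M 0 * V 0 - V 0 * M0 = 0
      rw [hV0, hM00, one_mul, mul_one, sub_self]
  -- the Jacobian and V·exp satisfy the same linear ODE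
  have hBDu : ∀ (τ : ℝ) (i j : Fin N), (M τ - A τ) i j = pd j (fun w => u w i) (X τ y) := by
    intro τ i j
    have hMe : M τ i j = pd j (fun w => u w i) (X τ y)
        + ∑ s, Γ (X τ y) i s j * u (X τ y) s := rfl
    have hAe : A τ i j = ∑ s, u (X τ y) s * Γ (X τ y) i j s := rfl
    have hs : ∑ s, u (X τ y) s * Γ (X τ y) i j s
        = ∑ s, Γ (X τ y) i s j * u (X τ y) s := by
      refine Finset.sum_congr rfl fun s _ => ?_
      rw [hΓsymm (X τ y) i j s, mul_comm]
    rw [Matrix.sub_apply, hMe, hAe, hs, add_sub_cancel_right]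
  have hBc : ∀ i j, Continuous fun τ => (M τ - A τ) i j := by
    intro i j
    have : (fun τ => (M τ - A τ) i j) = fun τ => M τ i j - A τ i j := rfl
    rw [this]
    exact (hMc i j).sub (hAc i j)
  have hJ' : ∀ t ∈ Icc (0:ℝ) T, ∀ i k,
      HasDerivAt (fun τ => J τ i k) (∑ j, (M t - A t) i j * J t j k) t := by
    intro t ht i k
    have h := variational u hu hTpos y X hXsmooth hXode t ht i k
    have heq : ∑ j, pd j (fun w => u w i) (X t y) * pd k (fun x => X t x j) y
        = ∑ j, (M t - A t) i j * J t j k := by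
      refine Finset.sum_congr rfl fun j _ => ?_
      rw [hBDu t i j]
      rfl
    rw [heq] at h
    exact h
  have hW' : ∀ t ∈ Icc (0:ℝ) T, ∀ i k,
      HasDerivAt (fun τ => (V τ * Et τ) i k) (∑ j, (M t - A t) i j * (V t * Et t) j k) t := by
    intro t ht i k
    have hcommP : M t * V t = V t * M0 := sub_eq_zero.1 (hP t ht)
    have hprod : HasDerivAt (fun σ => ∑ j, V σ i j * Et σ j k)
        (∑ j, (((-(A t)) * V t) i j * Et t j k + V t i j * (Et t * M0) j k)) t :=
      HasDerivAt.fun_sum fun j _ => (hV' t ht i j).fun_mul (exp_entry_hasDerivAt M0 t j k)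
    have hfun3 : (fun σ => ∑ j, V σ i j * Et σ j k) = fun σ => (V σ * Et σ) i k := by
      funext σ; rw [Matrix.mul_apply]
    rw [hfun3] at hprod
    have e1 : ∑ j, (((-(A t)) * V t) i j * Et t j k + V t i j * (Et t * M0) j k)
        = (((-(A t)) * V t) * Et t + V t * (Et t * M0)) i k := by
      rw [Finset.sum_add_distrib, Matrix.add_apply, Matrix.mul_apply, Matrix.mul_apply]
    rw [e1] at hprod
    have e2 : ((-(A t)) * V t) * Et t + V t * (Et t * M0)
        = (M t - A t) * (V t * Et t) := by
      have hce : Et t * M0 = M0 * Et t := exp_mul_comm M0 t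
      calc ((-(A t)) * V t) * Et t + V t * (Et t * M0)
          = ((-(A t)) * V t) * Et t + (V t * M0) * Et t := by rw [hce, ← mul_assoc]
        _ = ((-(A t)) * V t) * Et t + (M t * V t) * Et t := by rw [← hcommP]
        _ = (M t - A t) * (V t * Et t) := by noncomm_ring
    rw [e2] at hprod
    have e3 : ((M t - A t) * (V t * Et t)) i k
        = ∑ j, (M t - A t) i j * (V t * Et t) j k := Matrix.mul_apply
    rw [e3] at hprod
    exact hprod
  -- conclude by uniqueness
  have hinit : J 0 = V 0 * Et 0 := by
    have hE0 : Et 0 = 1 := exp_zero_smul M0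
    rw [hV0, hE0, one_mul]
    exact hJ0
  have hfinal := ode_unique (fun τ => M τ - A τ) J (fun τ => V τ * Et τ) hBc hJ' hW' hinit
  intro t ht
  exact hfinal t ht
end
end
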